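/- arXiv:1508.03877 — 10 statements merged into one kernel-verified Lean document; each statement's English description precedes it below -/
import Mathlib

section
/- Let X be a normed real vector space, let 0 < α < 1 and 0 ≤ ε < α, and let T > 0. Suppose f : [0,T] → X satisfies f(0) = 0 and ‖f(t) − f(s)‖ ≤ K·|t − s|^α for all s, t ∈ [0,T], for some constant K ≥ 0. Then there exists a constant C, depending only on α and ε, such that ‖t^{−ε} f(t) − s^{−ε} f(s)‖ ≤ C·K·|t − s|^{α−ε} for all s, t ∈ [0,T], where for s = 0 the term s^{−ε} f(s) is interpreted as 0. -/
open Real Set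

private lemma aux_inv_diff (ε s t : ℝ) (hε0 : 0 ≤ ε) (hε1 : ε ≤ 1) (hs : 0 < s)
    (hst : s ≤ t) : s ^ (-ε) - t ^ (-ε) ≤ (t - s) * s ^ (-ε - 1) := by
  have ht : (0:ℝ) < t := hs.trans_le hst
  have h1 : t ^ (-ε) = s ^ (-ε) * (s / t) ^ ε := by
    rw [Real.div_rpow hs.le ht.le, ← mul_div_assoc, ← Real.rpow_add hs]
    norm_num
    exact Real.rpow_neg ht.le ε
  have hx1 : s / t ≤ 1 := div_le_one_of_le₀ hst ht.le
  have h2 : s / t ≤ (s / t) ^ ε := by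
    have := Real.rpow_le_rpow_of_exponent_ge (div_pos hs ht) hx1 hε1
    simpa using this
  have h3 : 1 - (s / t) ^ ε ≤ (t - s) / s := by
    have h4 : (1:ℝ) - s / t = (t - s) / t := by field_simp
    have h5 : (t - s) / t ≤ (t - s) / s :=
      div_le_div_of_nonneg_left (by linarith) hs hst
    linarith
  calc s ^ (-ε) - t ^ (-ε) = s ^ (-ε) * (1 - (s / t) ^ ε) := by rw [h1]; ring
    _ ≤ s ^ (-ε) * ((t - s) / s) :=
        mul_le_mul_of_nonneg_left h3 (Real.rpow_nonneg hs.le _)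
    _ = (t - s) * s ^ (-ε - 1) := by
        rw [Real.rpow_sub hs, Real.rpow_one]; ring

/-- Weighted-Hölder lemma: if `f` is `α`-Hölder on `[0,T]` with `f 0 = 0`, then
`t ↦ t^{-ε} f(t)` is `(α-ε)`-Hölder on `[0,T]`, with a constant depending only on `α, ε`. -/
theorem stmt0 (α ε : ℝ) (hα0 : 0 < α) (hα1 : α < 1) (hε0 : 0 ≤ ε) (hεα : ε < α) :
    ∃ C : ℝ, ∀ (X : Type*) [NormedAddCommGroup X] [NormedSpace ℝ X]
      (T : ℝ), 0 < T → ∀ (f : ℝ → X) (K : ℝ), 0 ≤ K → f 0 = 0 →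
      (∀ s ∈ Set.Icc (0:ℝ) T, ∀ t ∈ Set.Icc (0:ℝ) T, ‖f t - f s‖ ≤ K * |t - s| ^ α) →
      ∀ s ∈ Set.Icc (0:ℝ) T, ∀ t ∈ Set.Icc (0:ℝ) T,
        ‖t ^ (-ε) • f t - s ^ (-ε) • f s‖ ≤ C * K * |t - s| ^ (α - ε) := by
  refine ⟨2, ?_⟩
  intro X _ _ T hT f K hK hf0 hH
  have hβ : (0:ℝ) < α - ε := sub_pos.2 hεα
  suffices key : ∀ s ∈ Set.Icc (0:ℝ) T, ∀ t ∈ Set.Icc (0:ℝ) T, s ≤ t →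
      ‖t ^ (-ε) • f t - s ^ (-ε) • f s‖ ≤ 2 * K * |t - s| ^ (α - ε) by
    intro s hs t ht
    rcases le_total s t with h | h
    · exact key s hs t ht h
    · rw [norm_sub_rev, abs_sub_comm]
      exact key t ht s hs h
  intro s hs t ht hst
  rcases eq_or_lt_of_le hst with rfl | hlt
  · simp [Real.zero_rpow hβ.ne']
  have habs : |t - s| = t - s := abs_of_nonneg (by linarith)
  have hd : (0:ℝ) < t - s := by linarith
  rcases eq_or_lt_of_le hs.1 with rfl | hs0
  · -- s = 0
    have ht0 : (0:ℝ) < t := hlt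
    rw [hf0, smul_zero, sub_zero, norm_smul, Real.norm_eq_abs,
      abs_of_nonneg (Real.rpow_nonneg ht0.le _)]
    have h1 : ‖f t‖ ≤ K * t ^ α := by
      simpa [hf0, abs_of_nonneg ht0.le] using hH 0 ⟨le_rfl, hT.le⟩ t ht
    calc t ^ (-ε) * ‖f t‖ ≤ t ^ (-ε) * (K * t ^ α) :=
          mul_le_mul_of_nonneg_left h1 (Real.rpow_nonneg ht0.le _)
      _ = K * t ^ (α - ε) := by
          rw [mul_comm, mul_assoc, ← Real.rpow_add ht0]; ring_nf
      _ ≤ 2 * K * |t - 0| ^ (α - ε) := by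
          rw [sub_zero, abs_of_nonneg ht0.le]
          nlinarith [Real.rpow_nonneg ht0.le (α - ε), mul_nonneg hK (Real.rpow_nonneg ht0.le (α - ε))]
  · -- 0 < s < t
    have ht0 : (0:ℝ) < t := lt_trans hs0 hlt
    have hdecomp : t ^ (-ε) • f t - s ^ (-ε) • f s
        = t ^ (-ε) • (f t - f s) + (t ^ (-ε) - s ^ (-ε)) • f s := by
      rw [smul_sub, sub_smul]; abel
    have hmono : t ^ (-ε) ≤ s ^ (-ε) := by
      rw [Real.rpow_neg hs0.le, Real.rpow_neg ht0.le]
      exact inv_anti₀ (Real.rpow_pos_of_pos hs0 ε)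
        (Real.rpow_le_rpow hs0.le hst hε0)
    have hfs : ‖f s‖ ≤ K * s ^ α := by
      simpa [hf0, abs_of_nonneg hs.1] using hH 0 ⟨le_rfl, hT.le⟩ s hs
    have hfts : ‖f t - f s‖ ≤ K * (t - s) ^ α := by
      have := hH s hs t ht
      rwa [habs] at this
    -- term A
    have hA : t ^ (-ε) * ‖f t - f s‖ ≤ K * (t - s) ^ (α - ε) := by
      have h2 : (t - s) ^ ε ≤ t ^ ε := Real.rpow_le_rpow hd.le (by linarith) hε0
      calc t ^ (-ε) * ‖f t - f s‖ ≤ t ^ (-ε) * (K * (t - s) ^ α) :=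
            mul_le_mul_of_nonneg_left hfts (Real.rpow_nonneg ht0.le _)
        _ = K * (t ^ (-ε) * (t - s) ^ α) := by ring
        _ ≤ K * (t - s) ^ (α - ε) := by
            apply mul_le_mul_of_nonneg_left _ hK
            have e : (t - s) ^ α = (t - s) ^ ε * (t - s) ^ (α - ε) := by
              rw [← Real.rpow_add hd]; ring_nf
            rw [Real.rpow_neg ht0.le, inv_mul_le_iff₀ (Real.rpow_pos_of_pos ht0 ε), e]
            exact mul_le_mul_of_nonneg_right h2 (Real.rpow_nonneg hd.le _)
    -- term B
    have hB : (s ^ (-ε) - t ^ (-ε)) * ‖f s‖ ≤ K * (t - s) ^ (α - ε) := by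
      have hkey : (s ^ (-ε) - t ^ (-ε)) * s ^ α ≤ (t - s) ^ (α - ε) := by
        rcases le_total s (t - s) with hc | hc
        · -- s ≤ t - s
          have h1 : s ^ (-ε) - t ^ (-ε) ≤ s ^ (-ε) := by
            have := Real.rpow_nonneg ht0.le (-ε); linarith
          calc (s ^ (-ε) - t ^ (-ε)) * s ^ α ≤ s ^ (-ε) * s ^ α :=
                mul_le_mul_of_nonneg_right h1 (Real.rpow_nonneg hs0.le _)
            _ = s ^ (α - ε) := by rw [← Real.rpow_add hs0]; ring_nf
            _ ≤ (t - s) ^ (α - ε) := Real.rpow_le_rpow hs0.le hc hβ.le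
        · -- t - s ≤ s
          have h1 := aux_inv_diff ε s t hε0 (by linarith) hs0 hst
          calc (s ^ (-ε) - t ^ (-ε)) * s ^ α
              ≤ ((t - s) * s ^ (-ε - 1)) * s ^ α :=
                mul_le_mul_of_nonneg_right h1 (Real.rpow_nonneg hs0.le _)
            _ = (t - s) * s ^ (α - ε - 1) := by
                rw [mul_assoc, ← Real.rpow_add hs0]; ring_nf
            _ ≤ (t - s) ^ (α - ε) := by
                have e1 : (t - s) = (t - s) ^ (α - ε) * (t - s) ^ (1 - (α - ε)) := by
                  rw [← Real.rpow_add hd]; norm_num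
                have e2 : (t - s) ^ (1 - (α - ε)) ≤ s ^ (1 - (α - ε)) :=
                  Real.rpow_le_rpow hd.le hc (by linarith)
                have e3 : s ^ (1 - (α - ε)) * s ^ (α - ε - 1) = 1 := by
                  rw [← Real.rpow_add hs0]; norm_num
                calc (t - s) * s ^ (α - ε - 1)
                    = (t - s) ^ (α - ε) * ((t - s) ^ (1 - (α - ε)) * s ^ (α - ε - 1)) := by
                      rw [← mul_assoc, ← e1]
                  _ ≤ (t - s) ^ (α - ε) * (s ^ (1 - (α - ε)) * s ^ (α - ε - 1)) := by
                      apply mul_le_mul_of_nonneg_left _ (Real.rpow_nonneg hd.le _)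
                      exact mul_le_mul_of_nonneg_right e2 (Real.rpow_nonneg hs0.le _)
                  _ = (t - s) ^ (α - ε) := by rw [e3, mul_one]
      calc (s ^ (-ε) - t ^ (-ε)) * ‖f s‖ ≤ (s ^ (-ε) - t ^ (-ε)) * (K * s ^ α) :=
            mul_le_mul_of_nonneg_left hfs (by linarith)
        _ = K * ((s ^ (-ε) - t ^ (-ε)) * s ^ α) := by ring
        _ ≤ K * (t - s) ^ (α - ε) := mul_le_mul_of_nonneg_left hkey hK
    calc ‖t ^ (-ε) • f t - s ^ (-ε) • f s‖
        ≤ ‖t ^ (-ε) • (f t - f s)‖ + ‖(t ^ (-ε) - s ^ (-ε)) • f s‖ := by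
          rw [hdecomp]; exact norm_add_le _ _
      _ = t ^ (-ε) * ‖f t - f s‖ + (s ^ (-ε) - t ^ (-ε)) * ‖f s‖ := by
          rw [norm_smul, norm_smul, Real.norm_eq_abs, Real.norm_eq_abs,
            abs_of_nonneg (Real.rpow_nonneg ht0.le _),
            abs_of_nonpos (by linarith : t ^ (-ε) - s ^ (-ε) ≤ 0)]
          ring
      _ ≤ K * (t - s) ^ (α - ε) + K * (t - s) ^ (α - ε) := add_le_add hA hB
      _ = 2 * K * (t - s) ^ (α - ε) := by ring
      _ = 2 * K * |t - s| ^ (α - ε) := by rw [habs]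
end

section
/- Let π be a finite signed measure on ℝ which is symmetric (invariant under the map y ↦ −y), has total mass zero (π(ℝ) = 0), has finite fourth moment (∫ |y|⁴ d|π|(y) < ∞, where |π| denotes the total variation measure of π), and satisfies ∫ y² dπ(y) = 2. Define φ : ℝ → ℝ by φ(u) = (1 − cos u)/u² for u ≠ 0 and φ(0) = 1/2, and set f(x) = ∫ φ(x·y)·y² dπ(y) for x ∈ ℝ. Then: (i) for every x ≠ 0 one has f(x) = −x^{−2} ∫ e^{ixy} dπ(y) (this integral is real by symmetry); (ii) f is twice continuously differentiable on ℝ; (iii) f, f′ and f″ are bounded on ℝ; and (iv) f(0) = 1. -/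
open MeasureTheory

/-- Integral of a real function against a finite signed measure, via the Jordan decomposition. -/
noncomputable def signedIntegral (p : SignedMeasure ℝ) (g : ℝ → ℝ) : ℝ :=
  (∫ y, g y ∂p.toJordanDecomposition.posPart) - ∫ y, g y ∂p.toJordanDecomposition.negPart

/-- Integral of a complex function against a finite signed measure, via the Jordan
decomposition. -/
noncomputable def csignedIntegral (p : SignedMeasure ℝ) (g : ℝ → ℂ) : ℂ :=
  (∫ y, g y ∂p.toJordanDecomposition.posPart) - ∫ y, g y ∂p.toJordanDecomposition.negPart

/-- `φ(u) = (1 - cos u)/u²` for `u ≠ 0`, and `φ(0) = 1/2`. -/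
noncomputable def phiFn (u : ℝ) : ℝ := if u = 0 then 1/2 else (1 - Real.cos u) / u ^ 2

/-- `f(x) = ∫ φ(x y) y² dπ(y)`. -/
noncomputable def fFn (p : SignedMeasure ℝ) (x : ℝ) : ℝ :=
  signedIntegral p (fun y => phiFn (x * y) * y ^ 2)

/-!
The key identity is `φ(u) = ∫₀¹ cos (u t) (1 - t) dt`. It shows that `φ` has the same shape
`u ↦ ∫ g (u t) h(t) dm(t)` as `f(x) = ∫ φ(x y) y² dπ(y)` itself. Differentiating such an integral
under the integral sign costs one factor of the integration variable per derivative, so if `g` is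
C² with bounded `g, g', g''` and `h, y h, y² h` are integrable, the integral is again C² with
bounded derivatives. Applying this first to `cos` with weight `1 - t` on `(0, 1]`, then to `φ`
with weight `y²` against both Jordan parts of `π` (where the fourth moment is needed) gives (ii)
and (iii).

For `x ≠ 0`, `φ(x y) y² = (1 - cos (x y)) / x²`, so (i) follows from `π(ℝ) = 0` once the
characteristic functions of the Jordan parts are real; they are, because by uniqueness of the
Jordan decomposition both parts of a symmetric signed measure are symmetric. Finally (iv) is
`φ(0) = 1/2` together with `∫ y² dπ = 2`.
-/

open Filter Set

def BoundedC2 (F : ℝ → ℝ) : Prop :=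
  ContDiff ℝ 2 F ∧ ∃ M, ∀ x, |F x| ≤ M ∧ |deriv F x| ≤ M ∧ |deriv (deriv F) x| ≤ M

theorem boundedC2_of_hasDerivAt {F F' F'' : ℝ → ℝ} (hF : ∀ x, HasDerivAt F (F' x) x)
    (hF' : ∀ x, HasDerivAt F' (F'' x) x) (hF'' : Continuous F'') {M₀ M₁ M₂ : ℝ}
    (hM₀ : ∀ x, |F x| ≤ M₀) (hM₁ : ∀ x, |F' x| ≤ M₁) (hM₂ : ∀ x, |F'' x| ≤ M₂) :
    BoundedC2 F := by
  have hd : deriv F = F' := funext fun x => (hF x).deriv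
  have hd' : deriv F' = F'' := funext fun x => (hF' x).deriv
  refine ⟨?_, max M₀ (max M₁ M₂), fun x => ?_⟩
  · rw [show (2 : WithTop ℕ∞) = 1 + 1 from rfl, contDiff_succ_iff_deriv, hd,
      contDiff_one_iff_deriv, hd']
    exact ⟨fun x => (hF x).differentiableAt, by simp, fun x => (hF' x).differentiableAt, hF''⟩
  · rw [hd, hd']
    exact ⟨(hM₀ x).trans (le_max_left _ _),
      (hM₁ x).trans ((le_max_left _ _).trans (le_max_right _ _)),
      (hM₂ x).trans ((le_max_right _ _).trans (le_max_right _ _))⟩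

theorem BoundedC2.sub {F G : ℝ → ℝ} (hF : BoundedC2 F) (hG : BoundedC2 G) :
    BoundedC2 (F - G) := by
  obtain ⟨hFc, M, hM⟩ := hF
  obtain ⟨hGc, N, hN⟩ := hG
  have hd : deriv (F - G) = deriv F - deriv G :=
    funext fun x => deriv_sub (hFc.differentiable two_ne_zero x) (hGc.differentiable two_ne_zero x)
  have hd' : deriv (deriv F - deriv G) = deriv (deriv F) - deriv (deriv G) :=
    funext fun x => deriv_sub (hFc.differentiable_deriv_two x) (hGc.differentiable_deriv_two x)
  refine ⟨hFc.sub hGc, M + N, fun x => ?_⟩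
  simp only [hd, hd', Pi.sub_apply]
  obtain ⟨hM0, hM1, hM2⟩ := hM x
  obtain ⟨hN0, hN1, hN2⟩ := hN x
  exact ⟨(abs_sub _ _).trans (add_le_add hM0 hN0), (abs_sub _ _).trans (add_le_add hM1 hN1),
    (abs_sub _ _).trans (add_le_add hM2 hN2)⟩

section ParametricIntegral

variable {μ : Measure ℝ} {g g' h : ℝ → ℝ} {C : ℝ}

theorem abs_integral_comp_mul_mul_le (hg : ∀ u, |g u| ≤ C) (hh : Integrable h μ) (x : ℝ) :
    |∫ y, g (x * y) * h y ∂μ| ≤ C * ∫ y, |h y| ∂μ := by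
  have hb : ∀ y, ‖g (x * y) * h y‖ ≤ C * |h y| := fun y => by
    rw [Real.norm_eq_abs, abs_mul]
    exact mul_le_mul_of_nonneg_right (hg _) (abs_nonneg _)
  calc |∫ y, g (x * y) * h y ∂μ| = ‖∫ y, g (x * y) * h y ∂μ‖ := (Real.norm_eq_abs _).symm
    _ ≤ ∫ y, C * |h y| ∂μ := norm_integral_le_of_norm_le (hh.abs.const_mul C) (.of_forall hb)
    _ = C * ∫ y, |h y| ∂μ := integral_const_mul C _

theorem integrable_comp_mul_mul (hg : Continuous g) (hC : ∀ u, |g u| ≤ C) (hh : Integrable h μ)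
    (x : ℝ) : Integrable (fun y => g (x * y) * h y) μ :=
  hh.bdd_mul (by fun_prop : Continuous fun y => g (x * y)).aestronglyMeasurable
    (.of_forall fun y => hC _)

theorem continuous_integral_comp_mul_mul (hg : Continuous g) (hC : ∀ u, |g u| ≤ C)
    (hh : Integrable h μ) : Continuous fun x => ∫ y, g (x * y) * h y ∂μ :=
  continuous_of_dominated (bound := fun y => C * |h y|)
    (fun x => (integrable_comp_mul_mul hg hC hh x).aestronglyMeasurable)
    (fun x => .of_forall fun y => by
      rw [Real.norm_eq_abs, abs_mul]
      exact mul_le_mul_of_nonneg_right (hC _) (abs_nonneg _))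
    (hh.abs.const_mul C) (.of_forall fun y => by fun_prop)

theorem hasDerivAt_integral_comp_mul_mul (hg : ∀ u, HasDerivAt g (g' u) u) (hg' : Continuous g')
    {D : ℝ} (hD : ∀ u, |g u| ≤ D) (hC : ∀ u, |g' u| ≤ C) (hh : Integrable h μ)
    (hyh : Integrable (fun y => y * h y) μ) (x : ℝ) :
    HasDerivAt (fun x => ∫ y, g (x * y) * h y ∂μ) (∫ y, g' (x * y) * (y * h y) ∂μ) x := by
  have hgc : Continuous g := continuous_iff_continuousAt.2 fun u => (hg u).continuousAt
  refine (hasDerivAt_integral_of_dominated_loc_of_deriv_le (bound := fun y => C * |y * h y|)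
    (F' := fun x y => g' (x * y) * (y * h y))
    (Metric.ball_mem_nhds x one_pos)
    (.of_forall fun x => (integrable_comp_mul_mul hgc hD hh x).aestronglyMeasurable)
    (integrable_comp_mul_mul hgc hD hh x)
    (integrable_comp_mul_mul hg' hC hyh x).aestronglyMeasurable
    (.of_forall fun y x _ => ?_) (hyh.abs.const_mul C)
    (.of_forall fun y x _ => ?_)).2
  · rw [Real.norm_eq_abs, abs_mul]
    exact mul_le_mul_of_nonneg_right (hC _) (abs_nonneg _)
  · exact (((hg (x * y)).comp x (hasDerivAt_mul_const y)).mul_const (h y)).congr_deriv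
      (by ring)

theorem BoundedC2.integral_comp_mul_mul (hg : BoundedC2 g) (h₀ : Integrable h μ)
    (h₁ : Integrable (fun y => y * h y) μ) (h₂ : Integrable (fun y => y * (y * h y)) μ) :
    BoundedC2 fun x => ∫ y, g (x * y) * h y ∂μ := by
  obtain ⟨hgc, M, hM⟩ := hg
  have hg₁ : ∀ u, HasDerivAt g (deriv g u) u :=
    fun u => (hgc.differentiable two_ne_zero u).hasDerivAt
  have hg₂ : ∀ u, HasDerivAt (deriv g) (deriv (deriv g) u) u :=
    fun u => (hgc.differentiable_deriv_two u).hasDerivAt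
  have hg₂c : Continuous (deriv (deriv g)) :=
    (ContDiff.deriv' (n := 1) hgc).continuous_deriv_one
  exact boundedC2_of_hasDerivAt
    (fun x => hasDerivAt_integral_comp_mul_mul hg₁ (hgc.continuous_deriv one_le_two)
      (fun u => (hM u).1) (fun u => (hM u).2.1) h₀ h₁ x)
    (fun x => hasDerivAt_integral_comp_mul_mul hg₂ hg₂c
      (fun u => (hM u).2.1) (fun u => (hM u).2.2) h₁ h₂ x)
    (continuous_integral_comp_mul_mul hg₂c (fun u => (hM u).2.2) h₂)
    (abs_integral_comp_mul_mul_le (fun u => (hM u).1) h₀)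
    (abs_integral_comp_mul_mul_le (fun u => (hM u).2.1) h₁)
    (abs_integral_comp_mul_mul_le (fun u => (hM u).2.2) h₂)

end ParametricIntegral

theorem boundedC2_cos : BoundedC2 Real.cos := by
  refine boundedC2_of_hasDerivAt (F' := fun u => -Real.sin u) (F'' := fun u => -Real.cos u)
    Real.hasDerivAt_cos (fun u => (Real.hasDerivAt_sin u).neg) (by fun_prop)
    Real.abs_cos_le_one (fun u => (abs_neg _).trans_le (Real.abs_sin_le_one u))
    (fun u => (abs_neg _).trans_le (Real.abs_cos_le_one u))

theorem phiFn_eq_integral (u : ℝ) : phiFn u = ∫ t in Ioc 0 1, Real.cos (u * t) * (1 - t) := by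
  rw [← intervalIntegral.integral_of_le zero_le_one]
  rcases eq_or_ne u 0 with rfl | hu
  · simp only [zero_mul, Real.cos_zero, one_mul]
    rw [intervalIntegral.integral_sub intervalIntegrable_const
      intervalIntegral.intervalIntegrable_id]
    norm_num [phiFn, integral_id]
  · have hF : ∀ t ∈ uIcc (0 : ℝ) 1, HasDerivAt
        (fun t => (1 - t) * Real.sin (u * t) / u - Real.cos (u * t) / u ^ 2)
        (Real.cos (u * t) * (1 - t)) t := fun t _ => by
      have hut : HasDerivAt (fun t => u * t) u t := by
        simpa using (hasDerivAt_id t).const_mul u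
      refine ((((hasDerivAt_id t).const_sub 1).mul ((Real.hasDerivAt_sin _).comp t hut)).div_const
        u |>.sub (((Real.hasDerivAt_cos _).comp t hut).div_const (u ^ 2))).congr_deriv ?_
      simp only [Function.comp_apply, id]
      field_simp
      ring
    rw [intervalIntegral.integral_eq_sub_of_hasDerivAt hF
      (Continuous.intervalIntegrable (by fun_prop) _ _)]
    simp [phiFn, hu]
    field_simp
    ring

theorem boundedC2_phiFn : BoundedC2 phiFn := by
  rw [show phiFn = _ from funext phiFn_eq_integral]
  exact boundedC2_cos.integral_comp_mul_mul (Continuous.integrableOn_Ioc (by fun_prop))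
    (Continuous.integrableOn_Ioc (by fun_prop)) (Continuous.integrableOn_Ioc (by fun_prop))

theorem integrable_pow_of_lintegral_abs_pow_lt_top {μ : Measure ℝ} [IsFiniteMeasure μ] {n k : ℕ}
    (hn : ∫⁻ y, ENNReal.ofReal (|y| ^ n) ∂μ < ⊤) (hk : k ≤ n) :
    Integrable (fun y => y ^ k) μ := by
  have hn' : Integrable (fun y : ℝ => |y| ^ n) μ :=
    ⟨by fun_prop, (hasFiniteIntegral_iff_ofReal (.of_forall fun y => by positivity)).2 hn⟩
  refine (hn'.add (integrable_const 1)).mono' (by fun_prop) (.of_forall fun y => ?_)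
  rw [norm_pow, Real.norm_eq_abs]
  show |y| ^ k ≤ |y| ^ n + 1
  rcases le_total |y| 1 with hy | hy
  · linarith [pow_le_one₀ (n := k) (abs_nonneg y) hy, pow_nonneg (abs_nonneg y) n]
  · linarith [pow_le_pow_right₀ hy hk]

namespace MeasureTheory

variable {α β : Type*} [MeasurableSpace α] [MeasurableSpace β] {f : α → β}

noncomputable def JordanDecomposition.map (j : JordanDecomposition α)
    (hf : MeasurableEmbedding f) : JordanDecomposition β where
  posPart := j.posPart.map f
  negPart := j.negPart.map f
  mutuallySingular := hf.mutuallySingular_map j.mutuallySingular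

theorem JordanDecomposition.toSignedMeasure_map (j : JordanDecomposition α)
    (hf : MeasurableEmbedding f) : (j.map hf).toSignedMeasure = j.toSignedMeasure.map f := by
  ext i hi
  rw [VectorMeasure.map_apply _ hf.measurable hi, toSignedMeasure, toSignedMeasure,
    Measure.toSignedMeasure_sub_apply hi, Measure.toSignedMeasure_sub_apply (hf.measurable hi)]
  simp [JordanDecomposition.map, Measure.real, hf.map_apply]

theorem SignedMeasure.toJordanDecomposition_map (s : SignedMeasure α)
    (hf : MeasurableEmbedding f) :
    SignedMeasure.toJordanDecomposition (s.map f) = s.toJordanDecomposition.map hf :=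
  toJordanDecomposition_eq <| by
    rw [JordanDecomposition.toSignedMeasure_map, toSignedMeasure_toJordanDecomposition]

end MeasureTheory

theorem charFun_eq_integral_cos_of_map_neg {μ : Measure ℝ} [IsFiniteMeasure μ]
    (hμ : μ.map (fun y => -y) = μ) (t : ℝ) : charFun μ t = ∫ y, Real.cos (t * y) ∂μ := by
  have hconj : (starRingEnd ℂ) (charFun μ t) = charFun μ t := by
    rw [← charFun_neg, ← neg_one_mul, ← charFun_map_mul]
    simp only [neg_one_mul, hμ]
  have hint : Integrable (fun y : ℝ => Complex.exp (t * y * Complex.I)) μ :=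
    (integrable_const (1 : ℝ)).mono' (by fun_prop) (.of_forall fun y => by
      rw [← Complex.ofReal_mul, Complex.norm_exp_ofReal_mul_I])
  rw [← Complex.conj_eq_iff_re.1 hconj, charFun_apply_real, ← RCLike.re_to_complex,
    ← integral_re hint]
  simp [← Complex.ofReal_mul, Complex.exp_ofReal_mul_I_re]

theorem phiFn_mul_mul_sq {x : ℝ} (hx : x ≠ 0) (y : ℝ) :
    phiFn (x * y) * y ^ 2 = (1 - Real.cos (x * y)) / x ^ 2 := by
  rcases eq_or_ne y 0 with rfl | hy
  · simp [phiFn]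
  · rw [phiFn, if_neg (mul_ne_zero hx hy)]
    field_simp

theorem integral_phiFn_mul_sq {μ : Measure ℝ} [IsFiniteMeasure μ] {x : ℝ} (hx : x ≠ 0) :
    ∫ y, phiFn (x * y) * y ^ 2 ∂μ = (μ.real univ - ∫ y, Real.cos (x * y) ∂μ) / x ^ 2 := by
  simp_rw [phiFn_mul_mul_sq hx]
  rw [integral_div, integral_sub (integrable_const 1)
    ((integrable_const 1).mono' (by fun_prop) (.of_forall fun y => Real.abs_cos_le_one _))]
  simp

theorem boundedC2_integral_phiFn_mul_sq {μ : Measure ℝ} [IsFiniteMeasure μ]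
    (hμ : ∫⁻ y, ENNReal.ofReal (|y| ^ 4) ∂μ < ⊤) :
    BoundedC2 fun x => ∫ y, phiFn (x * y) * y ^ 2 ∂μ := by
  refine boundedC2_phiFn.integral_comp_mul_mul (integrable_pow_of_lintegral_abs_pow_lt_top hμ
    (by norm_num)) ?_ ?_
  · simpa only [← pow_succ'] using
      integrable_pow_of_lintegral_abs_pow_lt_top hμ (k := 3) (by norm_num)
  · simpa only [← pow_succ'] using
      integrable_pow_of_lintegral_abs_pow_lt_top hμ (k := 4) le_rfl

theorem boundedC2_fFn (p : SignedMeasure ℝ)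
    (hp : ∫⁻ y, ENNReal.ofReal (|y| ^ 4) ∂p.totalVariation < ⊤) : BoundedC2 (fFn p) := by
  rw [SignedMeasure.totalVariation, lintegral_add_measure, ENNReal.add_lt_top] at hp
  exact (boundedC2_integral_phiFn_mul_sq hp.1).sub (boundedC2_integral_phiFn_mul_sq hp.2)

theorem fFn_zero (p : SignedMeasure ℝ) : fFn p 0 = signedIntegral p (fun y => y ^ 2) / 2 := by
  simp only [fFn, signedIntegral, zero_mul, phiFn, if_true, integral_const_mul]
  ring

theorem ofReal_fFn_eq_neg_inv_sq_mul_csignedIntegral (p : SignedMeasure ℝ)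
    (hsym : p.map (fun y => -y) = p) (hmass : p Set.univ = 0) {x : ℝ} (hx : x ≠ 0) :
    (fFn p x : ℂ) = -((x : ℂ) ^ 2)⁻¹ *
      csignedIntegral p (fun y => Complex.exp (Complex.I * (x : ℂ) * (y : ℂ))) := by
  set j := p.toJordanDecomposition
  have hj : j = j.map measurableEmbedding_neg := by
    rw [← SignedMeasure.toJordanDecomposition_map, hsym]
  have hpos : j.posPart.map (fun y => -y) = j.posPart :=
    (congrArg JordanDecomposition.posPart hj).symm
  have hneg : j.negPart.map (fun y => -y) = j.negPart :=
    (congrArg JordanDecomposition.negPart hj).symm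
  have hmass' : j.posPart.real univ = j.negPart.real univ := by
    rw [← SignedMeasure.toSignedMeasure_toJordanDecomposition p,
      JordanDecomposition.toSignedMeasure, Measure.toSignedMeasure_sub_apply .univ] at hmass
    linarith
  have hexp : (fun y : ℝ => Complex.exp (Complex.I * x * y)) =
      fun y : ℝ => Complex.exp (x * y * Complex.I) := by
    funext y; ring_nf
  rw [csignedIntegral, hexp, ← charFun_apply_real, ← charFun_apply_real,
    charFun_eq_integral_cos_of_map_neg hpos, charFun_eq_integral_cos_of_map_neg hneg, fFn,
    signedIntegral, integral_phiFn_mul_sq hx, integral_phiFn_mul_sq hx, hmass']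
  push_cast
  ring

theorem stmt1 (p : SignedMeasure ℝ)
    (hsym : p.map (fun y => -y) = p)
    (hmass : p Set.univ = 0)
    (hmom4 : (∫⁻ y, ENNReal.ofReal (|y| ^ 4) ∂p.totalVariation) < ⊤)
    (hvar : signedIntegral p (fun y => y ^ 2) = 2) :
    (∀ x : ℝ, x ≠ 0 → (fFn p x : ℂ) =
      -((x : ℂ) ^ 2)⁻¹ *
        csignedIntegral p (fun y => Complex.exp (Complex.I * (x : ℂ) * (y : ℂ)))) ∧
    ContDiff ℝ 2 (fFn p) ∧
    (∃ M : ℝ, ∀ x : ℝ,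
      |fFn p x| ≤ M ∧ |deriv (fFn p) x| ≤ M ∧ |deriv (deriv (fFn p)) x| ≤ M) ∧
    fFn p 0 = 1 := by
  obtain ⟨hC2, hbdd⟩ := boundedC2_fFn p hmom4
  refine ⟨fun x hx => ofReal_fFn_eq_neg_inv_sq_mul_csignedIntegral p hsym hmass hx, hC2, hbdd,
    ?_⟩
  rw [fFn_zero, hvar]
  norm_num
end

section
/- Let ν be a finite signed measure on ℝ with total mass zero (ν(ℝ) = 0), finite second moment (∫ y² d|ν|(y) < ∞, where |ν| is the total variation measure), and ∫ y dν(y) = 1. Define ψ : ℝ → ℂ by ψ(u) = (e^{iu} − 1)/(iu) for u ≠ 0 and ψ(0) = 1, and set g(x) = ∫ ψ(x·y)·y dν(y) for x ∈ ℝ. Then: (i) for every x ≠ 0 one has g(x) = (ix)^{−1} ∫ e^{ixy} dν(y); (ii) g is continuously differentiable on ℝ; (iii) g and g′ are bounded; and (iv) g(0) = 1. -/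
open MeasureTheory

/-- `ψ(u) = (e^{iu} - 1)/(iu)` for `u ≠ 0`, and `ψ(0) = 1`. -/
noncomputable def psiFn (u : ℝ) : ℂ :=
  if u = 0 then 1 else (Complex.exp (Complex.I * (u : ℂ)) - 1) / (Complex.I * (u : ℂ))

/-- `g(x) = ∫ ψ(x y) y dν(y)`. -/
noncomputable def gFn (p : SignedMeasure ℝ) (x : ℝ) : ℂ :=
  csignedIntegral p (fun y => psiFn (x * y) * (y : ℂ))

/-! Since `ψ(u) = ∫₀¹ e^{itu} dt`, the function `ψ` is differentiable with
`ψ'(u) = ∫₀¹ it e^{itu} dt`, and `|ψ| ≤ 1`, `|ψ'| ≤ 1`. The integrand `ψ(xy) y` of `g` and its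
`x`-derivative `ψ'(xy) y²` are therefore dominated by `|y|` and `y²`, which are `|ν|`-integrable
by the second-moment assumption; differentiating under the integral sign gives `g ∈ C¹` with
`|g| ≤ ∫ |y| d|ν|` and `|g'| ≤ ∫ y² d|ν|`. For `x ≠ 0`, `ψ(xy) y = (e^{ixy} - 1)/(ix)`, and the
constant term integrates to `ν(ℝ)/(ix) = 0`. Finally `g(0) = ∫ y dν(y) = 1`. -/

open Complex

noncomputable def psiDeriv (u : ℝ) : ℂ := ∫ t in (0 : ℝ)..1, I * t * cexp (I * u * t)

lemma psiFn_eq_intervalIntegral (u : ℝ) : psiFn u = ∫ t in (0 : ℝ)..1, cexp (I * u * t) := by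
  rcases eq_or_ne u 0 with rfl | hu
  · simp [psiFn]
  · have hIu : I * u ≠ 0 := mul_ne_zero I_ne_zero (ofReal_ne_zero.2 hu)
    simp [psiFn, hu, integral_exp_mul_complex hIu]

lemma hasDerivAt_cexp_I_mul_mul (u t : ℝ) :
    HasDerivAt (fun u : ℝ => cexp (I * u * t)) (I * t * cexp (I * u * t)) u := by
  have := (((hasDerivAt_id' u).ofReal_comp.const_mul I).mul_const (t : ℂ)).cexp
  convert this using 1
  push_cast
  ring

lemma norm_cexp_I_mul_mul (u t : ℝ) : ‖cexp (I * u * t)‖ = 1 := by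
  rw [norm_exp]; simp

lemma hasDerivAt_psiFn (u : ℝ) : HasDerivAt psiFn (psiDeriv u) u := by
  have hψ : psiFn = fun u : ℝ => ∫ t in (0 : ℝ)..1, cexp (I * u * t) :=
    funext psiFn_eq_intervalIntegral
  rw [hψ]
  refine (intervalIntegral.hasDerivAt_integral_of_dominated_loc_of_deriv_le (bound := fun _ => 1)
    Filter.univ_mem (.of_forall fun v => (by fun_prop : Continuous _).aestronglyMeasurable)
    ((by fun_prop : Continuous _).intervalIntegrable _ _)
    (by fun_prop : Continuous _).aestronglyMeasurable ?_ intervalIntegrable_const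
    (.of_forall fun t _ v _ => hasDerivAt_cexp_I_mul_mul v t)).2
  refine .of_forall fun t ht v _ => ?_
  rw [Set.uIoc_of_le zero_le_one] at ht
  simpa [norm_cexp_I_mul_mul, abs_of_pos ht.1] using ht.2

@[fun_prop]
lemma continuous_psiFn : Continuous psiFn :=
  continuous_iff_continuousAt.2 fun u => (hasDerivAt_psiFn u).continuousAt

@[fun_prop]
lemma continuous_psiDeriv : Continuous psiDeriv := by
  unfold psiDeriv; fun_prop

lemma norm_psiFn_le_one (u : ℝ) : ‖psiFn u‖ ≤ 1 := by
  simpa [psiFn_eq_intervalIntegral] using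
    intervalIntegral.norm_integral_le_of_norm_le_const (a := 0) (b := 1) (C := 1)
      (f := fun t : ℝ => cexp (I * u * t)) fun t _ => (norm_cexp_I_mul_mul u t).le

lemma norm_psiDeriv_le_one (u : ℝ) : ‖psiDeriv u‖ ≤ 1 := by
  refine (intervalIntegral.norm_integral_le_of_norm_le_const fun t ht => ?_).trans_eq
    (by simp : (1 : ℝ) * |1 - 0| = 1)
  rw [Set.uIoc_of_le zero_le_one] at ht
  simpa [norm_cexp_I_mul_mul, abs_of_pos ht.1] using ht.2

lemma psiFn_mul_mul_eq {x : ℝ} (hx : x ≠ 0) (y : ℝ) :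
    psiFn (x * y) * y = (I * x)⁻¹ * (cexp (I * x * y) - 1) := by
  rcases eq_or_ne y 0 with rfl | hy
  · simp
  · have hx' : (x : ℂ) ≠ 0 := ofReal_ne_zero.2 hx
    have hy' : (y : ℂ) ≠ 0 := ofReal_ne_zero.2 hy
    rw [psiFn, if_neg (mul_ne_zero hx hy)]
    push_cast
    field_simp

lemma norm_psiFn_mul_le (x y : ℝ) : ‖psiFn (x * y) * y‖ ≤ |y| := by
  rw [norm_mul, norm_real, Real.norm_eq_abs]
  exact mul_le_of_le_one_left (abs_nonneg y) (norm_psiFn_le_one _)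

lemma norm_psiDeriv_mul_sq_le (x y : ℝ) : ‖psiDeriv (x * y) * (y : ℂ) ^ 2‖ ≤ y ^ 2 := by
  rw [norm_mul, norm_pow, norm_real, Real.norm_eq_abs, sq_abs]
  exact mul_le_of_le_one_left (sq_nonneg y) (norm_psiDeriv_le_one _)

lemma hasDerivAt_psiFn_mul_mul (x y : ℝ) :
    HasDerivAt (fun x : ℝ => psiFn (x * y) * y) (psiDeriv (x * y) * (y : ℂ) ^ 2) x := by
  refine (((hasDerivAt_psiFn (x * y)).scomp x (hasDerivAt_mul_const y)).mul_const
    (y : ℂ)).congr_deriv ?_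
  rw [real_smul]
  ring

section Measure

variable {μ : Measure ℝ}

lemma hasDerivAt_integral_psiFn_mul_mul (h1 : Integrable (fun y : ℝ => y) μ)
    (h2 : Integrable (fun y : ℝ => y ^ 2) μ) (x : ℝ) :
    HasDerivAt (fun x => ∫ y, psiFn (x * y) * y ∂μ) (∫ y, psiDeriv (x * y) * (y : ℂ) ^ 2 ∂μ) x :=
  (hasDerivAt_integral_of_dominated_loc_of_deriv_le (bound := fun y => y ^ 2) Filter.univ_mem
    (.of_forall fun x => (by fun_prop : Continuous _).aestronglyMeasurable)
    (h1.abs.mono' (by fun_prop : Continuous _).aestronglyMeasurable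
      (.of_forall (norm_psiFn_mul_le x)))
    (by fun_prop : Continuous _).aestronglyMeasurable
    (.of_forall fun y x _ => norm_psiDeriv_mul_sq_le x y) h2
    (.of_forall fun y x _ => hasDerivAt_psiFn_mul_mul x y)).2

lemma continuous_integral_psiDeriv_mul_sq (h2 : Integrable (fun y : ℝ => y ^ 2) μ) :
    Continuous fun x => ∫ y, psiDeriv (x * y) * (y : ℂ) ^ 2 ∂μ :=
  continuous_of_dominated (fun x => (by fun_prop : Continuous _).aestronglyMeasurable)
    (fun x => .of_forall (norm_psiDeriv_mul_sq_le x)) h2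
    (.of_forall fun y => by fun_prop)

end Measure

namespace MeasureTheory.SignedMeasure

variable {α : Type*} [MeasurableSpace α] (p : SignedMeasure α)

lemma integrable_posPart {E : Type*} [NormedAddCommGroup E] {f : α → E}
    (hf : Integrable f p.totalVariation) : Integrable f p.toJordanDecomposition.posPart :=
  (integrable_add_measure.1 hf).1

lemma integrable_negPart {E : Type*} [NormedAddCommGroup E] {f : α → E}
    (hf : Integrable f p.totalVariation) : Integrable f p.toJordanDecomposition.negPart :=
  (integrable_add_measure.1 hf).2

end MeasureTheory.SignedMeasure

section SignedIntegral

variable (p : SignedMeasure ℝ)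

lemma csignedIntegral_const (c : ℂ) : csignedIntegral p (fun _ => c) = p Set.univ • c := by
  rw [csignedIntegral, integral_const, integral_const,
    p.apply_eq_posPart_real_sub_negPart_real MeasurableSet.univ, sub_smul]

lemma csignedIntegral_const_mul (c : ℂ) (f : ℝ → ℂ) :
    csignedIntegral p (fun y => c * f y) = c * csignedIntegral p f := by
  rw [csignedIntegral, integral_const_mul, integral_const_mul, csignedIntegral, mul_sub]

lemma csignedIntegral_sub {f g : ℝ → ℂ} (hf : Integrable f p.totalVariation)
    (hg : Integrable g p.totalVariation) :
    csignedIntegral p (fun y => f y - g y) = csignedIntegral p f - csignedIntegral p g := by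
  rw [csignedIntegral, integral_sub (p.integrable_posPart hf) (p.integrable_posPart hg),
    integral_sub (p.integrable_negPart hf) (p.integrable_negPart hg), csignedIntegral,
    csignedIntegral]
  ring

lemma csignedIntegral_ofReal (f : ℝ → ℝ) :
    csignedIntegral p (fun y => (f y : ℂ)) = signedIntegral p f := by
  rw [csignedIntegral, integral_complex_ofReal, integral_complex_ofReal, signedIntegral,
    ofReal_sub]

lemma norm_csignedIntegral_le_of_norm_le {f : ℝ → ℂ} {b : ℝ → ℝ}
    (hb : Integrable b p.totalVariation) (hfb : ∀ y, ‖f y‖ ≤ b y) :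
    ‖csignedIntegral p f‖ ≤ ∫ y, b y ∂p.totalVariation := by
  rw [SignedMeasure.totalVariation, integral_add_measure (p.integrable_posPart hb)
    (p.integrable_negPart hb)]
  exact (norm_sub_le _ _).trans (add_le_add
    (norm_integral_le_of_norm_le (p.integrable_posPart hb) (.of_forall hfb))
    (norm_integral_le_of_norm_le (p.integrable_negPart hb) (.of_forall hfb)))

end SignedIntegral

section gFn

variable {p : SignedMeasure ℝ}

lemma gFn_eq_of_ne_zero (hmass : p Set.univ = 0) {x : ℝ} (hx : x ≠ 0) :
    gFn p x = (I * x)⁻¹ * csignedIntegral p (fun y => cexp (I * x * y)) := by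
  have hexp : Integrable (fun y : ℝ => cexp (I * x * y)) p.totalVariation :=
    (integrable_const (1 : ℝ)).mono' (by fun_prop : Continuous _).aestronglyMeasurable
      (.of_forall fun y => (norm_cexp_I_mul_mul x y).le)
  simp only [gFn, psiFn_mul_mul_eq hx]
  rw [csignedIntegral_const_mul, csignedIntegral_sub p hexp (integrable_const 1),
    csignedIntegral_const, hmass, zero_smul, sub_zero]

lemma gFn_zero : gFn p 0 = signedIntegral p (fun y => y) := by
  simp only [gFn, zero_mul, psiFn, if_true, one_mul]
  exact csignedIntegral_ofReal p (fun y => y)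

lemma hasDerivAt_gFn (h1 : Integrable (fun y : ℝ => y) p.totalVariation)
    (h2 : Integrable (fun y : ℝ => y ^ 2) p.totalVariation) (x : ℝ) :
    HasDerivAt (gFn p) (csignedIntegral p fun y => psiDeriv (x * y) * (y : ℂ) ^ 2) x :=
  (hasDerivAt_integral_psiFn_mul_mul (p.integrable_posPart h1) (p.integrable_posPart h2) x).sub
    (hasDerivAt_integral_psiFn_mul_mul (p.integrable_negPart h1) (p.integrable_negPart h2) x)

lemma deriv_gFn (h1 : Integrable (fun y : ℝ => y) p.totalVariation)
    (h2 : Integrable (fun y : ℝ => y ^ 2) p.totalVariation) :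
    deriv (gFn p) = fun x => csignedIntegral p fun y => psiDeriv (x * y) * (y : ℂ) ^ 2 :=
  funext fun x => (hasDerivAt_gFn h1 h2 x).deriv

lemma contDiff_one_gFn (h1 : Integrable (fun y : ℝ => y) p.totalVariation)
    (h2 : Integrable (fun y : ℝ => y ^ 2) p.totalVariation) : ContDiff ℝ 1 (gFn p) := by
  rw [contDiff_one_iff_deriv, deriv_gFn h1 h2]
  exact ⟨fun x => (hasDerivAt_gFn h1 h2 x).differentiableAt,
    (continuous_integral_psiDeriv_mul_sq (p.integrable_posPart h2)).sub
      (continuous_integral_psiDeriv_mul_sq (p.integrable_negPart h2))⟩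

lemma norm_deriv_gFn_le (h1 : Integrable (fun y : ℝ => y) p.totalVariation)
    (h2 : Integrable (fun y : ℝ => y ^ 2) p.totalVariation) (x : ℝ) :
    ‖deriv (gFn p) x‖ ≤ ∫ y, y ^ 2 ∂p.totalVariation := by
  rw [deriv_gFn h1 h2]
  exact norm_csignedIntegral_le_of_norm_le p h2 (norm_psiDeriv_mul_sq_le x)

lemma norm_gFn_le (h1 : Integrable (fun y : ℝ => y) p.totalVariation) (x : ℝ) :
    ‖gFn p x‖ ≤ ∫ y, |y| ∂p.totalVariation :=
  norm_csignedIntegral_le_of_norm_le p h1.abs (norm_psiFn_mul_le x)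

end gFn

theorem stmt2 (p : SignedMeasure ℝ)
    (hmass : p Set.univ = 0)
    (hmom2 : (∫⁻ y, ENNReal.ofReal (y ^ 2) ∂p.totalVariation) < ⊤)
    (hmean : signedIntegral p (fun y => y) = 1) :
    (∀ x : ℝ, x ≠ 0 → gFn p x =
      (Complex.I * (x : ℂ))⁻¹ *
        csignedIntegral p (fun y => Complex.exp (Complex.I * (x : ℂ) * (y : ℂ)))) ∧
    ContDiff ℝ 1 (gFn p) ∧
    (∃ M : ℝ, ∀ x : ℝ, ‖gFn p x‖ ≤ M ∧ ‖deriv (gFn p) x‖ ≤ M) ∧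
    gFn p 0 = 1 := by
  have h2 : Integrable (fun y : ℝ => y ^ 2) p.totalVariation :=
    ⟨(by fun_prop : Continuous fun y : ℝ => y ^ 2).aestronglyMeasurable,
      (hasFiniteIntegral_iff_ofReal (.of_forall fun y => sq_nonneg y)).2 hmom2⟩
  have h1 : Integrable (fun y : ℝ => y) p.totalVariation :=
    ((memLp_two_iff_integrable_sq aestronglyMeasurable_id).2 h2).integrable one_le_two
  refine ⟨fun x hx => gFn_eq_of_ne_zero hmass hx, contDiff_one_gFn h1 h2, ?_, ?_⟩
  · exact ⟨max (∫ y, |y| ∂p.totalVariation) (∫ y, y ^ 2 ∂p.totalVariation), fun x =>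
      ⟨(norm_gFn_le h1 x).trans (le_max_left _ _),
        (norm_deriv_gFn_le h1 h2 x).trans (le_max_right _ _)⟩⟩
  · rw [gFn_zero, hmean, ofReal_one]
end

section
/- Let β ≥ 3 and 0 < α ≤ β. Then for every δ > 0 there exists a constant C > 0, depending only on α, β and δ, such that for every ω′ ∈ ℝ and every k′ ∈ ℤ with k′ ≠ 0, one has ∑_{k ∈ ℤ, k ≠ 0, k ≠ k′} ∫_ℝ (|ω|^{1/2} + |k|)^{−α} · (|ω′ − ω|^{1/2} + |k′ − k|)^{−β} dω ≤ C · (|ω′|^{1/2} + |k′|)^{−α + δ}. -/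
open MeasureTheory

/-!
The parabolic norm `|(ω, k)| = |ω|^{1/2} + |k|` is subadditive, so of the two factors
`a = |(ω, k)|` and `b = |(ω' - ω, k' - k)|` the larger one is at least `c / 2`, where
`c = |(ω', k')|`. Since `α ≤ β`, `a^{-α} b^{-β} ≤ (max a b)^{-α} (min a b)^{-β}`; after shrinking `δ`
to at most `α`, trading all but `δ` of the decay of the larger factor for `(c/2)^{δ-α}` leaves
`(min a b)^{-(β+δ)}`. As `β + δ > 3`, it splits as `r + 2s` with `r, s > 1`, and
`|(ω, k)|^{-(r+2s)} ≤ |k|^{-r} (1 + |ω|)^{-s}` is summable in `k` and integrable in `ω`.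
-/

noncomputable def parabolicNorm (ω k : ℝ) : ℝ := |ω| ^ ((1:ℝ) / 2) + |k|

lemma parabolicNorm_add_le (ω₁ ω₂ k₁ k₂ : ℝ) :
    parabolicNorm (ω₁ + ω₂) (k₁ + k₂) ≤ parabolicNorm ω₁ k₁ + parabolicNorm ω₂ k₂ := by
  have hω : |ω₁ + ω₂| ^ ((1:ℝ) / 2) ≤ |ω₁| ^ ((1:ℝ) / 2) + |ω₂| ^ ((1:ℝ) / 2) :=
    (Real.rpow_le_rpow (abs_nonneg _) (abs_add_le ω₁ ω₂) (by norm_num)).trans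
      (Real.rpow_add_le_add_rpow (abs_nonneg _) (abs_nonneg _) (by norm_num) (by norm_num))
  unfold parabolicNorm
  linarith [abs_add_le k₁ k₂]

lemma abs_le_parabolicNorm (ω k : ℝ) : |k| ≤ parabolicNorm ω k :=
  le_add_of_nonneg_left (by positivity)

lemma one_le_parabolicNorm {ω k : ℝ} (hk : 1 ≤ |k|) : 1 ≤ parabolicNorm ω k :=
  hk.trans (abs_le_parabolicNorm ω k)

lemma one_add_abs_le_sq_rpow_half_add_one (ω : ℝ) :
    1 + |ω| ≤ (|ω| ^ ((1:ℝ) / 2) + 1) ^ (2:ℝ) := by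
  rw [Real.rpow_two, ← Real.sqrt_eq_rpow]
  nlinarith [Real.sq_sqrt (abs_nonneg ω), Real.sqrt_nonneg |ω|]

lemma parabolicNorm_rpow_neg_le {r s ω k : ℝ} (hr : 0 ≤ r) (hs : 0 ≤ s) (hk : 1 ≤ |k|) :
    parabolicNorm ω k ^ (-(r + 2 * s)) ≤ |k| ^ (-r) * (1 + |ω|) ^ (-s) := by
  have hpos : 0 < parabolicNorm ω k := zero_lt_one.trans_le (one_le_parabolicNorm hk)
  have hω : parabolicNorm ω k ^ (-(2 * s)) ≤ (1 + |ω|) ^ (-s) :=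
    calc parabolicNorm ω k ^ (-(2 * s)) ≤ (|ω| ^ ((1:ℝ) / 2) + 1) ^ (-(2 * s)) :=
          Real.rpow_le_rpow_of_nonpos (by positivity) (by unfold parabolicNorm; linarith)
            (by linarith)
      _ = ((|ω| ^ ((1:ℝ) / 2) + 1) ^ (2:ℝ)) ^ (-s) := by
          rw [← Real.rpow_mul (by positivity)]; ring_nf
      _ ≤ (1 + |ω|) ^ (-s) :=
          Real.rpow_le_rpow_of_nonpos (by positivity)
            (one_add_abs_le_sq_rpow_half_add_one ω) (by linarith)
  rw [neg_add, Real.rpow_add hpos]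
  exact mul_le_mul
    (Real.rpow_le_rpow_of_nonpos (by linarith) (abs_le_parabolicNorm ω k) (by linarith)) hω
    (by positivity) (by positivity)

lemma rpow_neg_mul_rpow_neg_le_max_min {a b α β δ : ℝ} (ha : 0 < a) (hb : 0 < b) (hδ : 0 ≤ δ)
    (hαβ : α ≤ β) :
    a ^ (-α) * b ^ (-β) ≤ max a b ^ (δ - α) * min a b ^ (-(β + δ)) := by
  rcases le_total a b with hab | hba
  · rw [max_eq_right hab, min_eq_left hab]
    calc a ^ (-α) * b ^ (-β) = b ^ (δ - α) * (a ^ (-α) * b ^ (α - β - δ)) := by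
          rw [mul_left_comm, ← Real.rpow_add hb]; ring_nf
      _ ≤ b ^ (δ - α) * (a ^ (-α) * a ^ (α - β - δ)) := by
          have h : b ^ (α - β - δ) ≤ a ^ (α - β - δ) :=
            Real.rpow_le_rpow_of_nonpos ha hab (by linarith)
          gcongr
      _ = b ^ (δ - α) * a ^ (-(β + δ)) := by
          rw [← Real.rpow_add ha]; ring_nf
  · rw [max_eq_left hba, min_eq_right hba]
    calc a ^ (-α) * b ^ (-β) = a ^ (δ - α) * (a ^ (-δ) * b ^ (-β)) := by
          rw [← mul_assoc, ← Real.rpow_add ha]; ring_nf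
      _ ≤ a ^ (δ - α) * (b ^ (-δ) * b ^ (-β)) := by
          have h : a ^ (-δ) ≤ b ^ (-δ) := Real.rpow_le_rpow_of_nonpos hb hba (by linarith)
          gcongr
      _ = a ^ (δ - α) * b ^ (-(β + δ)) := by
          rw [← Real.rpow_add hb]; ring_nf

lemma rpow_neg_mul_rpow_neg_le_of_le_add {a b c α β δ : ℝ} (ha : 0 < a) (hb : 0 < b) (hc : 0 < c)
    (hcab : c ≤ a + b) (hδ : 0 ≤ δ) (hδα : δ ≤ α) (hαβ : α ≤ β) :
    a ^ (-α) * b ^ (-β) ≤ 2 ^ α * c ^ (δ - α) * (a ^ (-(β + δ)) + b ^ (-(β + δ))) := by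
  have hmax : max a b ^ (δ - α) ≤ 2 ^ α * c ^ (δ - α) :=
    calc max a b ^ (δ - α) ≤ (c / 2) ^ (δ - α) :=
          Real.rpow_le_rpow_of_nonpos (by positivity)
            (by linarith [le_max_left a b, le_max_right a b]) (by linarith)
      _ = 2 ^ (α - δ) * c ^ (δ - α) := by
          rw [Real.div_rpow hc.le zero_le_two, div_eq_mul_inv, ← Real.rpow_neg zero_le_two,
            neg_sub, mul_comm]
      _ ≤ 2 ^ α * c ^ (δ - α) := by
          gcongr
          · norm_num
          · linarith
  have hmin : min a b ^ (-(β + δ)) ≤ a ^ (-(β + δ)) + b ^ (-(β + δ)) := by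
    rcases min_choice a b with h | h <;> rw [h]
    · exact le_add_of_nonneg_right (by positivity)
    · exact le_add_of_nonneg_left (by positivity)
  calc a ^ (-α) * b ^ (-β) ≤ max a b ^ (δ - α) * min a b ^ (-(β + δ)) :=
        rpow_neg_mul_rpow_neg_le_max_min ha hb hδ hαβ
    _ ≤ _ := mul_le_mul hmax hmin (by positivity) (by positivity)

section Convolution

variable {α β δ r s ω' k k' : ℝ}

lemma parabolicNorm_rpow_neg_mul_le (hδ : 0 ≤ δ) (hδα : δ ≤ α) (hαβ : α ≤ β) (hr : 0 ≤ r)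
    (hs : 0 ≤ s) (hrs : β + δ = r + 2 * s) (hc : 0 < parabolicNorm ω' k') (hk : 1 ≤ |k|)
    (hk' : 1 ≤ |k' - k|) (ω : ℝ) :
    parabolicNorm ω k ^ (-α) * parabolicNorm (ω' - ω) (k' - k) ^ (-β) ≤
      2 ^ α * parabolicNorm ω' k' ^ (δ - α) *
        (|k| ^ (-r) * (1 + |ω|) ^ (-s) + |k' - k| ^ (-r) * (1 + |ω' - ω|) ^ (-s)) := by
  have htri : parabolicNorm ω' k' ≤ parabolicNorm ω k + parabolicNorm (ω' - ω) (k' - k) := by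
    simpa using parabolicNorm_add_le ω (ω' - ω) k (k' - k)
  calc _ ≤ 2 ^ α * parabolicNorm ω' k' ^ (δ - α) * (parabolicNorm ω k ^ (-(β + δ)) +
          parabolicNorm (ω' - ω) (k' - k) ^ (-(β + δ))) :=
        rpow_neg_mul_rpow_neg_le_of_le_add (zero_lt_one.trans_le (one_le_parabolicNorm hk))
          (zero_lt_one.trans_le (one_le_parabolicNorm hk')) hc htri hδ hδα hαβ
    _ ≤ _ := by
        rw [hrs]
        gcongr
        · exact parabolicNorm_rpow_neg_le hr hs hk
        · exact parabolicNorm_rpow_neg_le hr hs hk'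

lemma lintegral_parabolicNorm_rpow_neg_mul_le (hδ : 0 ≤ δ) (hδα : δ ≤ α) (hαβ : α ≤ β)
    (hr : 0 ≤ r) (hs : 1 < s) (hrs : β + δ = r + 2 * s) (hc : 0 < parabolicNorm ω' k')
    (hk : 1 ≤ |k|) (hk' : 1 ≤ |k' - k|) :
    ∫⁻ ω, ENNReal.ofReal (parabolicNorm ω k ^ (-α) * parabolicNorm (ω' - ω) (k' - k) ^ (-β)) ≤
      ENNReal.ofReal (2 ^ α * parabolicNorm ω' k' ^ (δ - α) * (∫ t, (1 + |t|) ^ (-s)) *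
        (|k| ^ (-r) + |k' - k| ^ (-r))) := by
  set g : ℝ → ℝ := fun t => (1 + |t|) ^ (-s)
  have hg : Integrable g := by
    simpa using integrable_one_add_norm (E := ℝ) (r := s) (by simpa using hs)
  have hg0 (t : ℝ) : 0 ≤ g t := by positivity
  have hK : 0 ≤ 2 ^ α * parabolicNorm ω' k' ^ (δ - α) :=
    mul_nonneg (by positivity) (Real.rpow_nonneg hc.le _)
  have hu : Integrable fun ω => |k| ^ (-r) * g ω := hg.const_mul _
  have hv : Integrable fun ω => |k' - k| ^ (-r) * g (ω' - ω) := (hg.comp_sub_left ω').const_mul _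
  calc _ ≤ ∫⁻ ω, ENNReal.ofReal (2 ^ α * parabolicNorm ω' k' ^ (δ - α) *
          (|k| ^ (-r) * g ω + |k' - k| ^ (-r) * g (ω' - ω))) :=
        lintegral_mono fun ω => ENNReal.ofReal_le_ofReal
          (parabolicNorm_rpow_neg_mul_le hδ hδα hαβ hr (by linarith) hrs hc hk hk' ω)
    _ = ENNReal.ofReal (∫ ω, 2 ^ α * parabolicNorm ω' k' ^ (δ - α) *
          (|k| ^ (-r) * g ω + |k' - k| ^ (-r) * g (ω' - ω))) :=
        (ofReal_integral_eq_lintegral_ofReal ((hu.add hv).const_mul _)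
          (ae_of_all _ fun ω => mul_nonneg hK (add_nonneg
            (mul_nonneg (by positivity) (hg0 ω)) (mul_nonneg (by positivity) (hg0 _))))).symm
    _ = _ := by
        rw [integral_const_mul, integral_add hu hv, integral_const_mul, integral_const_mul,
          integral_sub_left_eq_self g]
        congr 1
        ring

end Convolution

lemma tsum_ofReal_mul_abs_intCast_rpow_add {r A : ℝ} (hr : 1 < r) (hA : 0 ≤ A) (k' : ℤ) :
    ∑' k : ℤ, ENNReal.ofReal (A * (|(k : ℝ)| ^ (-r) + |(k' : ℝ) - k| ^ (-r))) =
      ENNReal.ofReal (A * (2 * ∑' k : ℤ, |(k : ℝ)| ^ (-r))) := by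
  have hu := Real.summable_abs_int_rpow hr
  have hv : Summable fun k : ℤ => |(k' : ℝ) - k| ^ (-r) := by
    simpa [Function.comp_def] using (Equiv.subLeft k').summable_iff.mpr hu
  have hshift : ∑' k : ℤ, |(k' : ℝ) - k| ^ (-r) = ∑' k : ℤ, |(k : ℝ)| ^ (-r) := by
    simpa using (Equiv.subLeft k').tsum_eq fun m : ℤ => |(m : ℝ)| ^ (-r)
  rw [← ENNReal.ofReal_tsum_of_nonneg (fun _ => by positivity) ((hu.add hv).mul_left A),
    tsum_mul_left, hu.tsum_add hv, hshift, two_mul]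

/-- Basic integral estimate, supercritical case: for `β ≥ 3` and `0 < α ≤ β`, for every
`δ > 0`,
`∑_{k ≠ 0, k ≠ k'} ∫ (|ω|^{1/2} + |k|)^{-α} (|ω'-ω|^{1/2} + |k'-k|)^{-β} dω
  ≲ (|ω'|^{1/2} + |k'|)^{-α+δ}`. -/
theorem stmt4 (α β : ℝ) (hβ : 3 ≤ β) (hα0 : 0 < α) (hαβ : α ≤ β) (δ : ℝ) (hδ : 0 < δ) :
    ∃ C : ℝ, 0 < C ∧ ∀ (ω' : ℝ) (k' : ℤ), k' ≠ 0 →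
      ∑' k : ℤ, (if k ≠ 0 ∧ k ≠ k' then
          ∫⁻ ω : ℝ, ENNReal.ofReal
            ((|ω| ^ ((1:ℝ)/2) + |(k : ℝ)|) ^ (-α) *
              (|ω' - ω| ^ ((1:ℝ)/2) + |(k' : ℝ) - (k : ℝ)|) ^ (-β))
        else 0)
      ≤ ENNReal.ofReal (C * (|ω'| ^ ((1:ℝ)/2) + |(k' : ℝ)|) ^ (-α + δ)) := by
  set δ' := min δ α
  have hδ' : 0 < δ' := lt_min hδ hα0
  set s := 1 + δ' / 4 with hs_def
  set r := β + δ' - 2 * s with hr_def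
  have hs : 1 < s := by linarith
  have hr : 1 < r := by linarith
  set S := ∑' k : ℤ, |(k : ℝ)| ^ (-r)
  set I := ∫ t : ℝ, (1 + |t|) ^ (-s)
  have hS : 0 ≤ S := tsum_nonneg fun _ => by positivity
  have hI : 0 ≤ I := integral_nonneg fun _ => by positivity
  refine ⟨2 ^ α * I * (2 * S) + 1, by positivity, fun ω' k' hk' => ?_⟩
  have hc : 1 ≤ parabolicNorm ω' k' := one_le_parabolicNorm (by exact_mod_cast Int.one_le_abs hk')
  have hK : 0 ≤ 2 ^ α * parabolicNorm ω' k' ^ (δ' - α) * I :=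
    mul_nonneg (mul_nonneg (by positivity) (Real.rpow_nonneg (by linarith) _)) hI
  calc _ ≤ ∑' k : ℤ, ENNReal.ofReal (2 ^ α * parabolicNorm ω' k' ^ (δ' - α) * I *
          (|(k : ℝ)| ^ (-r) + |(k' : ℝ) - k| ^ (-r))) := by
        refine ENNReal.tsum_le_tsum fun k => ?_
        split_ifs with hk
        · exact lintegral_parabolicNorm_rpow_neg_mul_le hδ'.le (min_le_right δ α) hαβ
            (by linarith) hs (by linarith) (by linarith) (by exact_mod_cast Int.one_le_abs hk.1)
            (by exact_mod_cast Int.one_le_abs (sub_ne_zero.2 (Ne.symm hk.2)))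
        · exact zero_le
    _ = ENNReal.ofReal (2 ^ α * parabolicNorm ω' k' ^ (δ' - α) * I * (2 * S)) :=
        tsum_ofReal_mul_abs_intCast_rpow_add hr hK k'
    _ ≤ ENNReal.ofReal ((2 ^ α * I * (2 * S) + 1) * parabolicNorm ω' k' ^ (-α + δ)) := by
        refine ENNReal.ofReal_le_ofReal ?_
        calc _ = 2 ^ α * I * (2 * S) * parabolicNorm ω' k' ^ (δ' - α) := by ring
          _ ≤ _ := by gcongr <;> linarith [min_le_left δ α]
end

section
/- For every ε > 0 there exists a constant C > 0 such that for all k₁, k₂ ∈ ℤ with k₁ + k₂ ≠ 0 one has ∑_{k₃ ∈ ℤ, k₃ ≠ 0} (|k₁ + k₂ + k₃| · |k₁ + k₃|) / ((k₃² + (k₁ + k₂ + k₃)²) · (k₃² + (k₁ + k₃)²)) ≤ C · |k₁ + k₂|^{ε − 1}. -/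
/-!
Write `m = k₁ + k₂`, `e = k₃` and `A = m + k₃`. By AM–GM in the factor containing `k₁ + k₃`, the
summand is at most `(|e| |A|)⁻¹ / 2`. As `|e| + |A| ≥ |m|`, the larger of `|e|, |A|` is at least
`|m| / 2`, so for `0 < s ≤ 1` one may trade a power `s - 1` of it for the power `-(1 + s)` of the
smaller one: `(|e| |A|)⁻¹ ≤ 2 ^ (1 - s) |m| ^ (s - 1) (|e| ^ (-(1 + s)) + |A| ^ (-(1 + s)))`.
Both resulting series in `k₃` are the convergent `∑ |j| ^ (-(1 + s))`.
-/

open Real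

lemma inv_mul_le_two_rpow_mul_rpow_of_le {a b M s : ℝ} (ha : 0 < a) (hab : a ≤ b) (hM : 0 < M)
    (hMab : M ≤ a + b) (hs0 : 0 ≤ s) (hs1 : s ≤ 1) :
    (a * b)⁻¹ ≤ 2 ^ (1 - s) * M ^ (s - 1) * a ^ (-(1 + s)) := by
  have hb : 0 < b := ha.trans_le hab
  have ha_inv : a⁻¹ = a ^ (-(1 + s)) * a ^ s := by
    rw [← rpow_add ha, show -(1 + s) + s = -1 by ring, rpow_neg_one]
  have hhalf : (M / 2) ^ (s - 1) = 2 ^ (1 - s) * M ^ (s - 1) := by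
    rw [div_rpow hM.le zero_le_two, div_eq_mul_inv, ← rpow_neg zero_le_two, neg_sub, mul_comm]
  calc (a * b)⁻¹ = a ^ (-(1 + s)) * (a ^ s * b⁻¹) := by rw [mul_inv, ha_inv, mul_assoc]
    _ ≤ a ^ (-(1 + s)) * (b ^ s * b⁻¹) := by gcongr
    _ = a ^ (-(1 + s)) * b ^ (s - 1) := by rw [rpow_sub_one hb.ne', div_eq_mul_inv]
    _ ≤ a ^ (-(1 + s)) * (M / 2) ^ (s - 1) :=
        mul_le_mul_of_nonneg_left
          (rpow_le_rpow_of_nonpos (by positivity) (by linarith) (by linarith)) (by positivity)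
    _ = 2 ^ (1 - s) * M ^ (s - 1) * a ^ (-(1 + s)) := by rw [hhalf, mul_comm]

lemma inv_mul_le_two_rpow_mul_rpow_add {a b M s : ℝ} (ha : 0 < a) (hb : 0 < b) (hM : 0 < M)
    (hMab : M ≤ a + b) (hs0 : 0 ≤ s) (hs1 : s ≤ 1) :
    (a * b)⁻¹ ≤ 2 ^ (1 - s) * M ^ (s - 1) * (a ^ (-(1 + s)) + b ^ (-(1 + s))) := by
  have hK : 0 ≤ 2 ^ (1 - s) * M ^ (s - 1) := by positivity
  have ha' : 0 ≤ a ^ (-(1 + s)) := rpow_nonneg ha.le _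
  have hb' : 0 ≤ b ^ (-(1 + s)) := rpow_nonneg hb.le _
  rw [mul_add]
  rcases le_total a b with hab | hba
  · have := inv_mul_le_two_rpow_mul_rpow_of_le ha hab hM hMab hs0 hs1
    nlinarith [mul_nonneg hK hb']
  · have := inv_mul_le_two_rpow_mul_rpow_of_le hb hba hM (by linarith) hs0 hs1
    rw [mul_comm b] at this
    nlinarith [mul_nonneg hK ha']

lemma abs_mul_abs_div_le_inv {e A B : ℝ} (he : e ≠ 0) (hA : A ≠ 0) :
    |A| * |B| / ((e ^ 2 + A ^ 2) * (e ^ 2 + B ^ 2)) ≤ (|e| * |A|)⁻¹ / 2 := by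
  have he0 : 0 < |e| := abs_pos.mpr he
  have hA0 : 0 < |A| := abs_pos.mpr hA
  have hA_le : |A| / (e ^ 2 + A ^ 2) ≤ |A|⁻¹ := by
    rw [div_le_iff₀ (by positivity), inv_mul_eq_div, le_div_iff₀ hA0]
    nlinarith [sq_abs A, sq_nonneg e]
  have hB_le : |B| / (e ^ 2 + B ^ 2) ≤ (2 * |e|)⁻¹ := by
    rw [div_le_iff₀ (by positivity), inv_mul_eq_div, le_div_iff₀ (by positivity)]
    nlinarith [sq_abs e, sq_abs B, sq_nonneg (|e| - |B|)]
  calc |A| * |B| / ((e ^ 2 + A ^ 2) * (e ^ 2 + B ^ 2))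
      = |A| / (e ^ 2 + A ^ 2) * (|B| / (e ^ 2 + B ^ 2)) := mul_div_mul_comm _ _ _ _
    _ ≤ |A|⁻¹ * (2 * |e|)⁻¹ := by gcongr
    _ = (|e| * |A|)⁻¹ / 2 := by field_simp

lemma vertex_summand_le {e A B s : ℝ} (he : e ≠ 0) (hAe : A - e ≠ 0) (hs0 : 0 ≤ s)
    (hs1 : s ≤ 1) :
    |A| * |B| / ((e ^ 2 + A ^ 2) * (e ^ 2 + B ^ 2)) ≤
      2 ^ (1 - s) * |A - e| ^ (s - 1) / 2 * (|e| ^ (-(1 + s)) + |A| ^ (-(1 + s))) := by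
  rcases eq_or_ne A 0 with rfl | hA
  · simp only [abs_zero, zero_mul, zero_div]
    positivity
  calc |A| * |B| / ((e ^ 2 + A ^ 2) * (e ^ 2 + B ^ 2)) ≤ (|e| * |A|)⁻¹ / 2 :=
        abs_mul_abs_div_le_inv he hA
    _ ≤ _ := by
        rw [div_mul_eq_mul_div]
        gcongr
        refine inv_mul_le_two_rpow_mul_rpow_add (abs_pos.mpr he) (abs_pos.mpr hA)
          (abs_pos.mpr hAe) ?_ hs0 hs1
        simpa only [abs_neg, add_comm] using abs_sub A e

lemma tsum_ofReal_mul_add_comp_add_left {G : Type*} [AddGroup G] {u : G → ℝ} (hu : Summable u)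
    (hu0 : 0 ≤ u) {c : ℝ} (hc : 0 ≤ c) (m : G) :
    ∑' n, ENNReal.ofReal (c * (u n + u (m + n))) = ENNReal.ofReal (c * (2 * ∑' n, u n)) := by
  have hshift : Summable fun n => u (m + n) := (Equiv.addLeft m).summable_iff.mpr hu
  have hshift_eq : ∑' n, u (m + n) = ∑' n, u n := (Equiv.addLeft m).tsum_eq u
  rw [← ENNReal.ofReal_tsum_of_nonneg (fun n => mul_nonneg hc (add_nonneg (hu0 n) (hu0 _)))
    ((hu.add hshift).mul_left c), tsum_mul_left, hu.tsum_add hshift, hshift_eq, two_mul]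

lemma tsum_vertex_le {s : ℝ} (hs0 : 0 < s) (hs1 : s ≤ 1) {k₁ k₂ : ℤ} (hk : k₁ + k₂ ≠ 0) :
    ∑' k₃ : ℤ, (if k₃ ≠ 0 then
        ENNReal.ofReal
          ((|(k₁ : ℝ) + (k₂ : ℝ) + (k₃ : ℝ)| * |(k₁ : ℝ) + (k₃ : ℝ)|) /
            (((k₃ : ℝ) ^ 2 + ((k₁ : ℝ) + (k₂ : ℝ) + (k₃ : ℝ)) ^ 2) *
              ((k₃ : ℝ) ^ 2 + ((k₁ : ℝ) + (k₃ : ℝ)) ^ 2)))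
      else 0)
    ≤ ENNReal.ofReal
        (2 ^ (1 - s) * (∑' j : ℤ, |(j : ℝ)| ^ (-(1 + s))) * |(k₁ : ℝ) + (k₂ : ℝ)| ^ (s - 1)) := by
  set u : ℤ → ℝ := fun j => |(j : ℝ)| ^ (-(1 + s))
  set c := 2 ^ (1 - s) * |(k₁ : ℝ) + (k₂ : ℝ)| ^ (s - 1) / 2
  have hk' : (k₁ : ℝ) + k₂ ≠ 0 := by exact_mod_cast hk
  calc _ ≤ ∑' k₃ : ℤ, ENNReal.ofReal (c * (u k₃ + u (k₁ + k₂ + k₃))) := by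
        refine ENNReal.tsum_le_tsum fun k₃ => ?_
        split_ifs with hk₃
        · refine ENNReal.ofReal_le_ofReal ?_
          have hA : (k₁ : ℝ) + k₂ + k₃ - k₃ = k₁ + k₂ := by ring
          have := vertex_summand_le (B := (k₁ : ℝ) + k₃) (Int.cast_ne_zero.mpr hk₃)
            (hA ▸ hk') hs0.le hs1
          simpa only [hA, u, Int.cast_add] using this
        · exact zero_le
    _ = ENNReal.ofReal (c * (2 * ∑' j, u j)) :=
        tsum_ofReal_mul_add_comp_add_left (summable_abs_int_rpow (by linarith))
          (fun j => rpow_nonneg (abs_nonneg _) _) (by positivity) _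
    _ = _ := by
        congr 1
        ring

/-- Vertex sum estimate for `V^{tree-8}`:
`∑_{k₃ ≠ 0} |k₁+k₂+k₃| |k₁+k₃| / ((k₃² + (k₁+k₂+k₃)²)(k₃² + (k₁+k₃)²)) ≲ |k₁+k₂|^{ε-1}`. -/
theorem stmt8 (ε : ℝ) (hε : 0 < ε) :
    ∃ C : ℝ, 0 < C ∧ ∀ k₁ k₂ : ℤ, k₁ + k₂ ≠ 0 →
      ∑' k₃ : ℤ, (if k₃ ≠ 0 then
          ENNReal.ofReal
            ((|(k₁ : ℝ) + (k₂ : ℝ) + (k₃ : ℝ)| * |(k₁ : ℝ) + (k₃ : ℝ)|) /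
              (((k₃ : ℝ) ^ 2 + ((k₁ : ℝ) + (k₂ : ℝ) + (k₃ : ℝ)) ^ 2) *
                ((k₃ : ℝ) ^ 2 + ((k₁ : ℝ) + (k₃ : ℝ)) ^ 2)))
        else 0)
      ≤ ENNReal.ofReal (C * |(k₁ : ℝ) + (k₂ : ℝ)| ^ (ε - 1)) := by
  set s := min ε 1
  have hs0 : 0 < s := lt_min hε one_pos
  have hZ : 0 < ∑' j : ℤ, |(j : ℝ)| ^ (-(1 + s)) :=
    (summable_abs_int_rpow (by linarith)).tsum_pos (fun j => rpow_nonneg (abs_nonneg _) _) 1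
      (by simp)
  refine ⟨2 ^ (1 - s) * ∑' j : ℤ, |(j : ℝ)| ^ (-(1 + s)), by positivity, fun k₁ k₂ hk => ?_⟩
  refine (tsum_vertex_le hs0 (min_le_right _ _) hk).trans (ENNReal.ofReal_le_ofReal ?_)
  have hM : 1 ≤ |(k₁ : ℝ) + k₂| := by exact_mod_cast Int.one_le_abs hk
  gcongr
  exact min_le_left ε 1
end

section
/- For every ε > 0 there exists a constant C > 0 such that for all k₁, k₂ ∈ ℤ with k₁ + k₂ ≠ 0 one has ∑_{k₃ ∈ ℤ, k₃ ≠ 0} (|k₁ + k₃| · |k₂ − k₃|) / ((k₃² + (k₂ − k₃)²) · ((k₁ + k₃)² + (k₂ − k₃)²)) ≤ C · |k₁ + k₂|^{ε − 1}. -/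
/-- Pointwise bound: with `a + b = m`, `|m| ≥ 1`, `b = 0` or `|b| ≥ 1`, `0 < ε' ≤ 1`,
we have `|a||b|/((x²+b²)(a²+b²)) ≤ 4 |m|^(ε'-1) |b|^(-(1+ε'))`. -/
lemma key_pointwise (ε' : ℝ) (hε0 : 0 < ε') (hε1 : ε' ≤ 1) (m x a b : ℝ)
    (hm : 1 ≤ |m|) (hab : a + b = m) (hb : b = 0 ∨ 1 ≤ |b|) :
    |a| * |b| / ((x ^ 2 + b ^ 2) * (a ^ 2 + b ^ 2)) ≤
      4 * |m| ^ (ε' - 1) * |b| ^ (-(1 + ε')) := by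
  rcases hb with hb | hb
  · subst hb
    rw [abs_zero, Real.zero_rpow (by intro h; nlinarith : -(1+ε') ≠ 0)]
    simp
  · have hbpos : (0:ℝ) < |b| := lt_of_lt_of_le one_pos hb
    have hmpos : (0:ℝ) < |m| := lt_of_lt_of_le one_pos hm
    set K : ℝ := max |b| |m| with hKdef
    have hK1 : (1:ℝ) ≤ K := le_trans hb (le_max_left _ _)
    have hKpos : (0:ℝ) < K := lt_of_lt_of_le one_pos hK1
    have hbK : |b| ≤ K := le_max_left _ _
    have hmK : |m| ≤ K := le_max_right _ _
    -- a² + b² ≥ K²/2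
    have hD2 : K ^ 2 / 2 ≤ a ^ 2 + b ^ 2 := by
      rcases le_total |b| |m| with h | h
      · have hKm : K = |m| := max_eq_right h
        rw [hKm]
        have h1 : m ^ 2 = |m| ^ 2 := (sq_abs m).symm
        have h2 : m ^ 2 = (a + b) ^ 2 := by rw [hab]
        nlinarith [sq_nonneg (a - b)]
      · have hKb : K = |b| := max_eq_left h
        rw [hKb]
        have h1 : b ^ 2 = |b| ^ 2 := (sq_abs b).symm
        nlinarith [sq_nonneg a]
    have ha : |a| ≤ 2 * K := by
      have : |a| = |m - b| := by rw [show a = m - b by linarith]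
      rw [this]
      calc |m - b| ≤ |m| + |b| := abs_sub _ _
        _ ≤ K + K := add_le_add hmK hbK
        _ = 2 * K := by ring
    -- step 1 : drop x², enlarge numerator, shrink denominator
    have step1 : |a| * |b| / ((x ^ 2 + b ^ 2) * (a ^ 2 + b ^ 2)) ≤
        (2 * K) * |b| / (b ^ 2 * (K ^ 2 / 2)) := by
      have hbne : b ≠ 0 := abs_pos.mp hbpos
      have hb2 : (0:ℝ) < b ^ 2 := by positivity
      have hK2 : (0:ℝ) < K ^ 2 / 2 := by positivity
      have hden : b ^ 2 * (K ^ 2 / 2) ≤ (x ^ 2 + b ^ 2) * (a ^ 2 + b ^ 2) := by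
        have hx2 : b ^ 2 ≤ x ^ 2 + b ^ 2 := by nlinarith [sq_nonneg x]
        exact mul_le_mul hx2 hD2 (le_of_lt hK2) (by positivity)
      calc |a| * |b| / ((x ^ 2 + b ^ 2) * (a ^ 2 + b ^ 2))
          ≤ |a| * |b| / (b ^ 2 * (K ^ 2 / 2)) := by
            apply div_le_div_of_nonneg_left (by positivity) (by positivity) hden
        _ ≤ (2 * K) * |b| / (b ^ 2 * (K ^ 2 / 2)) := by
            apply div_le_div_of_nonneg_right _ (by positivity)
            exact mul_le_mul_of_nonneg_right ha (abs_nonneg b)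
    have hb2abs : b ^ 2 = |b| ^ 2 := (sq_abs b).symm
    have step1' : (2 * K) * |b| / (b ^ 2 * (K ^ 2 / 2)) = 4 / (|b| * K) := by
      rw [hb2abs, div_eq_div_iff (by positivity) (by positivity)]
      ring
    -- step 2 : 4 / (|b| K) ≤ 4 |m|^(ε'-1) |b|^(-(1+ε'))
    have step2 : 4 / (|b| * K) ≤ 4 * |m| ^ (ε' - 1) * |b| ^ (-(1 + ε')) := by
      have hK : K⁻¹ ≤ |m| ^ (ε' - 1) * |b| ^ (-ε') := by
        have h1 : K ^ (ε' - 1) ≤ |m| ^ (ε' - 1) :=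
          Real.rpow_le_rpow_of_nonpos hmpos hmK (by linarith)
        have h2 : K ^ (-ε') ≤ |b| ^ (-ε') :=
          Real.rpow_le_rpow_of_nonpos hbpos hbK (by linarith)
        have : K⁻¹ = K ^ (ε' - 1) * K ^ (-ε') := by
          rw [← Real.rpow_add hKpos, show ε' - 1 + -ε' = -1 by ring,
            Real.rpow_neg_one]
        rw [this]
        exact mul_le_mul h1 h2 (Real.rpow_nonneg hKpos.le _) (Real.rpow_nonneg hmpos.le _)
      have hbsplit : |b| ^ (-(1 + ε')) = |b|⁻¹ * |b| ^ (-ε') := by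
        rw [show -(1 + ε') = -1 + -ε' by ring, Real.rpow_add hbpos, Real.rpow_neg_one]
      calc 4 / (|b| * K) = 4 * (|b|⁻¹ * K⁻¹) := by
            rw [div_eq_mul_inv, mul_inv]
        _ ≤ 4 * (|b|⁻¹ * (|m| ^ (ε' - 1) * |b| ^ (-ε'))) := by
            apply mul_le_mul_of_nonneg_left _ (by norm_num)
            exact mul_le_mul_of_nonneg_left hK (by positivity)
        _ = 4 * |m| ^ (ε' - 1) * |b| ^ (-(1 + ε')) := by
            rw [hbsplit]; ring
    calc |a| * |b| / ((x ^ 2 + b ^ 2) * (a ^ 2 + b ^ 2))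
        ≤ (2 * K) * |b| / (b ^ 2 * (K ^ 2 / 2)) := step1
      _ = 4 / (|b| * K) := step1'
      _ ≤ 4 * |m| ^ (ε' - 1) * |b| ^ (-(1 + ε')) := step2

/-- Vertex sum estimate for `V^{tree-9}`:
`∑_{k₃ ≠ 0} |k₁+k₃| |k₂-k₃| / ((k₃² + (k₂-k₃)²)((k₁+k₃)² + (k₂-k₃)²)) ≲ |k₁+k₂|^{ε-1}`. -/
theorem stmt9 (ε : ℝ) (hε : 0 < ε) :
    ∃ C : ℝ, 0 < C ∧ ∀ k₁ k₂ : ℤ, k₁ + k₂ ≠ 0 →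
      ∑' k₃ : ℤ, (if k₃ ≠ 0 then
          ENNReal.ofReal
            ((|(k₁ : ℝ) + (k₃ : ℝ)| * |(k₂ : ℝ) - (k₃ : ℝ)|) /
              (((k₃ : ℝ) ^ 2 + ((k₂ : ℝ) - (k₃ : ℝ)) ^ 2) *
                (((k₁ : ℝ) + (k₃ : ℝ)) ^ 2 + ((k₂ : ℝ) - (k₃ : ℝ)) ^ 2)))
        else 0)
      ≤ ENNReal.ofReal (C * |(k₁ : ℝ) + (k₂ : ℝ)| ^ (ε - 1)) := by
  set ε' : ℝ := min ε (1/2) with hε'def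
  have hε'0 : 0 < ε' := lt_min hε (by norm_num)
  have hε'1 : ε' ≤ 1 := le_trans (min_le_right _ _) (by norm_num)
  have hε'ε : ε' ≤ ε := min_le_left _ _
  -- the zeta-type series
  have hsum : Summable fun b : ℤ => |(b : ℝ)| ^ (-(1 + ε')) :=
    Real.summable_abs_int_rpow (by linarith)
  set S : ℝ := ∑' b : ℤ, |(b : ℝ)| ^ (-(1 + ε')) with hSdef
  have hSnonneg : 0 ≤ S := tsum_nonneg fun b => Real.rpow_nonneg (abs_nonneg _) _
  refine ⟨4 * S + 1, by positivity, fun k₁ k₂ hk => ?_⟩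
  set m : ℝ := (k₁ : ℝ) + (k₂ : ℝ) with hmdef
  have hmInt : m = ((k₁ + k₂ : ℤ) : ℝ) := by push_cast; ring
  have hm1 : (1:ℝ) ≤ |m| := by
    rw [hmInt, ← Int.cast_abs]
    exact_mod_cast Int.one_le_abs hk
  have hmpos : (0:ℝ) < |m| := lt_of_lt_of_le one_pos hm1
  -- termwise bound
  have hterm : ∀ k₃ : ℤ,
      (if k₃ ≠ 0 then
          ENNReal.ofReal
            ((|(k₁ : ℝ) + (k₃ : ℝ)| * |(k₂ : ℝ) - (k₃ : ℝ)|) /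
              (((k₃ : ℝ) ^ 2 + ((k₂ : ℝ) - (k₃ : ℝ)) ^ 2) *
                (((k₁ : ℝ) + (k₃ : ℝ)) ^ 2 + ((k₂ : ℝ) - (k₃ : ℝ)) ^ 2)))
        else 0)
      ≤ ENNReal.ofReal (4 * |m| ^ (ε' - 1) * |(k₂ : ℝ) - (k₃ : ℝ)| ^ (-(1 + ε'))) := by
    intro k₃
    by_cases h0 : k₃ = 0
    · simp [h0]
    · rw [if_pos h0]
      apply ENNReal.ofReal_le_ofReal
      apply key_pointwise ε' hε'0 hε'1 m (k₃ : ℝ) ((k₁ : ℝ) + (k₃ : ℝ)) ((k₂ : ℝ) - (k₃ : ℝ))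
        hm1 (by rw [hmdef]; ring)
      by_cases hb : k₂ - k₃ = 0
      · left
        have h : ((k₂ - k₃ : ℤ) : ℝ) = 0 := by exact_mod_cast hb
        push_cast at h
        linarith
      · right
        have : ((k₂ : ℝ) - (k₃ : ℝ)) = ((k₂ - k₃ : ℤ) : ℝ) := by push_cast; ring
        rw [this, ← Int.cast_abs]
        exact_mod_cast Int.one_le_abs hb
  calc ∑' k₃ : ℤ, (if k₃ ≠ 0 then
          ENNReal.ofReal
            ((|(k₁ : ℝ) + (k₃ : ℝ)| * |(k₂ : ℝ) - (k₃ : ℝ)|) /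
              (((k₃ : ℝ) ^ 2 + ((k₂ : ℝ) - (k₃ : ℝ)) ^ 2) *
                (((k₁ : ℝ) + (k₃ : ℝ)) ^ 2 + ((k₂ : ℝ) - (k₃ : ℝ)) ^ 2)))
        else 0)
      ≤ ∑' k₃ : ℤ, ENNReal.ofReal
          (4 * |m| ^ (ε' - 1) * |(k₂ : ℝ) - (k₃ : ℝ)| ^ (-(1 + ε'))) :=
        ENNReal.tsum_le_tsum hterm
    _ = ∑' b : ℤ, ENNReal.ofReal (4 * |m| ^ (ε' - 1) * |(b : ℝ)| ^ (-(1 + ε'))) := by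
        have := Equiv.tsum_eq (Equiv.subLeft k₂)
          (fun b : ℤ => ENNReal.ofReal (4 * |m| ^ (ε' - 1) * |(b : ℝ)| ^ (-(1 + ε'))))
        rw [← this]
        apply tsum_congr
        intro k₃
        congr 1
        have h : ((Equiv.subLeft k₂) k₃ : ℤ) = k₂ - k₃ := rfl
        rw [h]
        push_cast
        ring_nf
    _ = ENNReal.ofReal (∑' b : ℤ, 4 * |m| ^ (ε' - 1) * |(b : ℝ)| ^ (-(1 + ε'))) := by
        rw [ENNReal.ofReal_tsum_of_nonneg]
        · intro b; positivity
        · exact hsum.mul_left _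
    _ = ENNReal.ofReal (4 * |m| ^ (ε' - 1) * S) := by
        rw [tsum_mul_left]
    _ ≤ ENNReal.ofReal ((4 * S + 1) * |m| ^ (ε - 1)) := by
        apply ENNReal.ofReal_le_ofReal
        have h1 : |m| ^ (ε' - 1) ≤ |m| ^ (ε - 1) :=
          Real.rpow_le_rpow_of_exponent_le hm1 (by linarith)
        have h2 : (0:ℝ) ≤ |m| ^ (ε - 1) := Real.rpow_nonneg (abs_nonneg _) _
        nlinarith [Real.rpow_nonneg (abs_nonneg m) (ε' - 1)]
end

section
/- For every ε > 0 there exists a constant C > 0 such that for all m ∈ ℤ with m ≠ 0 one has ∑_{k ∈ ℤ, k ≠ 0} 1/(|k| · (k² + (m + k)²)^{1/2}) ≤ C · |m|^{ε − 1}. -/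
/-!
Put `R = √(k² + (m + k)²)`. Since `R ≥ |k|` and `2R ≥ |k| + |m + k| ≥ |m|`, weighted AM-GM gives
`|k| ^ δ |m| ^ (1 - δ) ≤ 2R` for every `δ ∈ [0, 1]`, so the `k`-th term is at most
`2 |m| ^ (δ - 1) |k| ^ (-(1 + δ))`. With `δ = min ε 1 > 0` the series `∑ |k| ^ (-(1 + δ))` converges.
-/

open Real

lemma abs_le_two_mul_sqrt_sq_add_sq_add (k m : ℝ) : |m| ≤ 2 * √(k ^ 2 + (m + k) ^ 2) := by
  have hk : |k| ≤ √(k ^ 2 + (m + k) ^ 2) := abs_le_sqrt (by nlinarith [sq_nonneg (m + k)])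
  have hmk : |m + k| ≤ √(k ^ 2 + (m + k) ^ 2) := abs_le_sqrt (by nlinarith [sq_nonneg k])
  calc |m| = |(m + k) - k| := by ring_nf
    _ ≤ |m + k| + |k| := abs_sub _ _
    _ ≤ 2 * √(k ^ 2 + (m + k) ^ 2) := by linarith

lemma one_div_abs_mul_sqrt_le {k m δ : ℝ} (hk : k ≠ 0) (hm : m ≠ 0) (hδ₀ : 0 ≤ δ) (hδ₁ : δ ≤ 1) :
    1 / (|k| * √(k ^ 2 + (m + k) ^ 2)) ≤ 2 * |m| ^ (δ - 1) * |k| ^ (-(1 + δ)) := by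
  set R := √(k ^ 2 + (m + k) ^ 2)
  have hk₀ : 0 < |k| := abs_pos.2 hk
  have hm₀ : 0 < |m| := abs_pos.2 hm
  have hkR : |k| ≤ R := abs_le_sqrt (by nlinarith [sq_nonneg (m + k)])
  have hmR : |m| ≤ 2 * R := abs_le_two_mul_sqrt_sq_add_sq_add k m
  have hmean : |k| ^ δ * |m| ^ (1 - δ) ≤ 2 * R :=
    calc |k| ^ δ * |m| ^ (1 - δ) ≤ δ * |k| + (1 - δ) * |m| :=
          geom_mean_le_arith_mean2_weighted hδ₀ (by linarith) hk₀.le hm₀.le (by ring)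
      _ ≤ 2 * R := by nlinarith
  have hrhs : 2 * |m| ^ (δ - 1) * |k| ^ (-(1 + δ)) = 2 / (|k| * (|k| ^ δ * |m| ^ (1 - δ))) := by
    rw [show δ - 1 = -(1 - δ) by ring, rpow_neg hm₀.le, rpow_neg hk₀.le, rpow_add hk₀, rpow_one]
    field_simp
  rw [hrhs, show 1 / (|k| * R) = 2 / (|k| * (2 * R)) by field_simp]
  gcongr

/-- Reduction lattice sum: `∑_{k ≠ 0} 1/(|k| (k² + (m+k)²)^{1/2}) ≲ |m|^{ε-1}`. -/
theorem stmt10 (ε : ℝ) (hε : 0 < ε) :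
    ∃ C : ℝ, 0 < C ∧ ∀ m : ℤ, m ≠ 0 →
      ∑' k : ℤ, (if k ≠ 0 then
          ENNReal.ofReal
            (1 / (|(k : ℝ)| * Real.sqrt ((k : ℝ) ^ 2 + ((m : ℝ) + (k : ℝ)) ^ 2)))
        else 0)
      ≤ ENNReal.ofReal (C * |(m : ℝ)| ^ (ε - 1)) := by
  set δ := min ε 1
  have hδ₀ : 0 < δ := lt_min hε one_pos
  have hsum : Summable fun k : ℤ => |(k : ℝ)| ^ (-(1 + δ)) := summable_abs_int_rpow (by linarith)
  set S := ∑' k : ℤ, |(k : ℝ)| ^ (-(1 + δ))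
  have hS : 0 < S := hsum.tsum_pos (fun k => by positivity) 1 (by simp)
  refine ⟨2 * S, by positivity, fun m hm => ?_⟩
  have hm₁ : (1 : ℝ) ≤ |(m : ℝ)| := by exact_mod_cast Int.one_le_abs hm
  calc _ ≤ ∑' k : ℤ, ENNReal.ofReal (2 * |(m : ℝ)| ^ (δ - 1) * |(k : ℝ)| ^ (-(1 + δ))) := by
        refine ENNReal.tsum_le_tsum fun k => ?_
        split_ifs with hk
        · exact ENNReal.ofReal_le_ofReal <| one_div_abs_mul_sqrt_le (Int.cast_ne_zero.2 hk)
            (Int.cast_ne_zero.2 hm) hδ₀.le (min_le_right _ _)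
        · exact zero_le
    _ = ENNReal.ofReal (2 * |(m : ℝ)| ^ (δ - 1) * S) := by
        rw [← ENNReal.ofReal_tsum_of_nonneg (fun k => by positivity) (hsum.mul_left _),
          tsum_mul_left]
    _ ≤ ENNReal.ofReal (2 * S * |(m : ℝ)| ^ (ε - 1)) := by
        rw [mul_right_comm]
        gcongr
        exact min_le_left ε 1
end

section
/- Let n ≥ 1 be an integer and let u : ℤ/nℤ → ℝ. Define B : ℤ/nℤ → ℝ by B(j) = (u(j)² + u(j)·u(j+1) + u(j+1)²)/3. Then ∑_{j ∈ ℤ/nℤ} u(j)·(B(j) − B(j−1)) = 0. -/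
/-!
Summation by parts moves the backward difference from `B` onto `u`, and
`(a - b) (a² + ab + b²) = a³ - b³` turns the result into the sum of the differences of `u³ / 3`
around the cycle, which telescopes to zero.
-/

open Finset

section FiniteAddGroup

variable {G : Type*} [AddGroup G] [Fintype G]

theorem Fintype.sum_sub_comp_add_right_eq_zero {M : Type*} [AddCommGroup M] (f : G → M) (a : G) :
    ∑ j, (f j - f (j + a)) = 0 := by
  rw [sum_sub_distrib, sub_eq_zero]
  exact (Equiv.sum_comp (Equiv.addRight a) f).symm

theorem Fintype.sum_mul_sub_comp_sub_eq_sum_sub_comp_add_mul {R : Type*} [CommRing R]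
    (u B : G → R) (a : G) :
    ∑ j, u j * (B j - B (j - a)) = ∑ j, (u j - u (j + a)) * B j := by
  have shifted : ∑ j, u j * B (j - a) = ∑ j, u (j + a) * B j := by
    rw [← Equiv.sum_comp (Equiv.addRight a) (fun j => u j * B (j - a))]
    simp only [Equiv.coe_addRight, add_sub_cancel_right]
  simp only [mul_sub, sub_mul, sum_sub_distrib, shifted]

end FiniteAddGroup

/-- Skew-symmetry identity for the Sasamoto–Spohn discretization:
with `B(j) = (u(j)² + u(j)u(j+1) + u(j+1)²)/3`, one has `∑_j u(j)(B(j) - B(j-1)) = 0`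
on the periodic lattice `ℤ/nℤ`. -/
theorem stmt12 (n : ℕ) [NeZero n] (u : ZMod n → ℝ) :
    ∑ j : ZMod n, u j *
        ((u j ^ 2 + u j * u (j + 1) + u (j + 1) ^ 2) / 3 -
          (u (j - 1) ^ 2 + u (j - 1) * u j + u j ^ 2) / 3) = 0 := by
  have byParts := Fintype.sum_mul_sub_comp_sub_eq_sum_sub_comp_add_mul u
    (fun j => (u j ^ 2 + u j * u (j + 1) + u (j + 1) ^ 2) / 3) 1
  simp only [sub_add_cancel] at byParts
  rw [byParts, ← Fintype.sum_sub_comp_add_right_eq_zero (fun j => u j ^ 3 / 3) 1]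
  exact sum_congr rfl fun j _ => by ring
end

section
/- Let f : ℝ → ℝ be twice continuously differentiable with f, f′ and f″ bounded, and let χ : ℝ → ℝ be infinitely differentiable with compact support. Assume there is c > 0 such that f(x) ≥ c for all x in the support of χ. Then for every β ≥ 0 and each k ∈ {0, 1, 2} there exists a constant C > 0 such that for all ε ∈ (0, 1], all t > 0 and all x ∈ ℝ: t^{β/2} · |x|^{β + k} · |(d/dx)^k ( e^{−t·f(εx)·x²} · χ(εx) )| ≤ C. -/
/-!
Put `u = t x²`, so that the weight is `t^{β/2} |x|^{β+k} = u^{β/2} |x|^k`. By Leibniz's rule,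
`x^k ψ^{(k)}(x)` is a combination of the products `x^i ∂^i e^{-φ}(x) · (εx)^{k-i} χ^{(k-i)}(εx)`,
where `φ(y) = t f(εy) y²`. The second factor vanishes unless `εx ∈ supp χ`, a compact set on which
it is bounded; there `f(εx) ≥ c` gives `e^{-φ(x)} ≤ e^{-cu}`, and Leibniz's rule once more gives
`x^j ∂^j φ(x) = O(u)` for `j ≤ 2`. Hence `|x|^k |ψ^{(k)}(x)| ≲ (1 + u)² e^{-cu}`, and
`u^{β/2} (1 + u)² e^{-cu}` is bounded on `[0, ∞)`.
-/

open Real Set Finset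

theorem rpow_mul_exp_neg_mul_le {c s v : ℝ} (hc : 0 < c) (hs : 0 < s) (hv : 0 ≤ v) :
    v ^ s * exp (-(c * v)) ≤ (s / c) ^ s := by
  have hcv : (c * v / s) ^ s ≤ exp (c * v) := by
    calc (c * v / s) ^ s ≤ exp (c * v / s) ^ s := by
          gcongr
          linarith [add_one_le_exp (c * v / s)]
      _ = exp (c * v) := by rw [← exp_mul, div_mul_cancel₀ _ hs.ne']
  calc v ^ s * exp (-(c * v)) = (s / c) ^ s * ((c * v / s) ^ s * exp (-(c * v))) := by
        rw [← mul_assoc, ← mul_rpow (by positivity) (by positivity)]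
        field_simp
    _ ≤ (s / c) ^ s * (exp (c * v) * exp (-(c * v))) := by gcongr
    _ = (s / c) ^ s := by rw [← exp_add, add_neg_cancel, exp_zero, mul_one]

theorem exists_rpow_mul_one_add_sq_mul_exp_neg_le {c γ : ℝ} (hc : 0 < c) (hγ : 0 ≤ γ) :
    ∃ K, ∀ u, 0 ≤ u → u ^ γ * ((1 + u) ^ 2 * exp (-(c * u))) ≤ K := by
  refine ⟨exp c * ((γ + 2) / c) ^ (γ + 2), fun u hu => ?_⟩
  have hu1 : (0 : ℝ) < 1 + u := by linarith
  calc u ^ γ * ((1 + u) ^ 2 * exp (-(c * u)))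
      ≤ (1 + u) ^ γ * ((1 + u) ^ 2 * exp (-(c * u))) := by gcongr; linarith
    _ = exp c * ((1 + u) ^ (γ + 2) * exp (-(c * (1 + u)))) := by
        rw [show γ + 2 = γ + ((2 : ℕ) : ℝ) by norm_num, rpow_add_natCast hu1.ne', ← mul_assoc,
          mul_comm (exp c), mul_assoc, mul_assoc, ← exp_add]
        ring_nf
    _ ≤ exp c * ((γ + 2) / c) ^ (γ + 2) := by
        gcongr
        exact rpow_mul_exp_neg_mul_le hc (by linarith) hu1.le

theorem rpow_half_mul_abs_rpow_add_natCast {t β : ℝ} (ht : 0 ≤ t) (hβ : 0 ≤ β) (x : ℝ) (k : ℕ) :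
    t ^ (β / 2) * |x| ^ (β + k) = (t * x ^ 2) ^ (β / 2) * |x| ^ k := by
  have hx : (x ^ 2) ^ (β / 2) = |x| ^ β := by
    rw [← sq_abs, ← rpow_natCast, ← rpow_mul (abs_nonneg x)]
    congr 1
    ring
  rw [rpow_add_of_nonneg (abs_nonneg x) hβ k.cast_nonneg, rpow_natCast,
    mul_rpow ht (sq_nonneg x), hx, mul_assoc]

theorem abs_pow_mul_abs_iteratedDeriv_mul_le {u v : ℝ → ℝ} {x D : ℝ} {n : ℕ}
    (hu : ContDiffAt ℝ n u x) (hv : ContDiffAt ℝ n v x)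
    (h : ∀ i ≤ n, |x| ^ i * |iteratedDeriv i u x| * (|x| ^ (n - i) * |iteratedDeriv (n - i) v x|)
      ≤ D) :
    |x| ^ n * |iteratedDeriv n (fun y => u y * v y) x| ≤ 2 ^ n * D := by
  have h2n : (2 : ℝ) ^ n = ∑ i ∈ range (n + 1), (n.choose i : ℝ) := by
    exact_mod_cast (Nat.sum_range_choose n).symm
  rw [iteratedDeriv_fun_mul hu hv, h2n, sum_mul]
  refine (mul_le_mul_of_nonneg_left (abs_sum_le_sum_abs _ _) (by positivity)).trans ?_
  rw [mul_sum]
  refine sum_le_sum fun i hi => ?_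
  have hi : i ≤ n := Nat.lt_succ_iff.mp (mem_range.mp hi)
  calc |x| ^ n * |(n.choose i : ℝ) * iteratedDeriv i u x * iteratedDeriv (n - i) v x|
      = n.choose i * (|x| ^ i * |iteratedDeriv i u x| *
          (|x| ^ (n - i) * |iteratedDeriv (n - i) v x|)) := by
        rw [abs_mul, abs_mul, Nat.abs_cast, ← pow_mul_pow_sub _ hi]
        ring
    _ ≤ n.choose i * D := by gcongr; exact h i hi

theorem abs_pow_mul_abs_iteratedDeriv_comp_const_mul {g : ℝ → ℝ} {j : ℕ} (hg : ContDiff ℝ j g)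
    (ε x : ℝ) :
    |x| ^ j * |iteratedDeriv j (fun y => g (ε * y)) x|
      = |ε * x| ^ j * |iteratedDeriv j g (ε * x)| := by
  rw [iteratedDeriv_comp_const_mul hg, abs_mul, abs_pow, abs_mul, mul_pow]
  ring

theorem iteratedDeriv_eq_zero_of_notMem_tsupport {g : ℝ → ℝ} {z : ℝ} (hz : z ∉ tsupport g)
    (j : ℕ) : iteratedDeriv j g z = 0 := by
  rw [iteratedDeriv_eq_iteratedFDeriv,
    Function.notMem_support.mp fun h => hz (support_iteratedFDeriv_subset j h)]
  rfl

theorem IsCompact.exists_bound_abs_pow_mul_abs_iteratedDeriv {K : Set ℝ} (hK : IsCompact K)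
    {g : ℝ → ℝ} {n : ℕ} (hg : ContDiff ℝ n g) :
    ∃ A, 0 ≤ A ∧ ∀ j ≤ n, ∀ z ∈ K, |z| ^ j * |iteratedDeriv j g z| ≤ A := by
  have hcont : Continuous fun z => ∑ j ∈ range (n + 1), |z| ^ j * |iteratedDeriv j g z| :=
    continuous_finsetSum _ fun j hj =>
      (continuous_abs.pow j).mul (hg.continuous_iteratedDeriv j
        (mod_cast Nat.lt_succ_iff.mp (mem_range.mp hj))).abs
  obtain ⟨A, hA⟩ := hK.exists_bound_of_continuousOn hcont.continuousOn
  refine ⟨max A 0, le_max_right _ _, fun j hj z hz => ?_⟩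
  calc |z| ^ j * |iteratedDeriv j g z|
      ≤ ∑ j ∈ range (n + 1), |z| ^ j * |iteratedDeriv j g z| :=
        single_le_sum (f := fun j => |z| ^ j * |iteratedDeriv j g z|)
          (fun _ _ => by positivity) (mem_range.mpr (Nat.lt_succ_of_le hj))
    _ ≤ A := (le_abs_self _).trans (hA z hz)
    _ ≤ max A 0 := le_max_left _ _

theorem abs_pow_mul_abs_iteratedDeriv_sq_le (i : ℕ) (x : ℝ) :
    |x| ^ i * |iteratedDeriv i (fun y => y ^ 2) x| ≤ 2 * x ^ 2 := by
  rcases i with _ | _ | _ | i <;> norm_num [Nat.descFactorial] <;> nlinarith [sq_abs x]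

theorem abs_pow_mul_abs_iteratedDeriv_mul_sq_le {g : ℝ → ℝ} {x B : ℝ} {n : ℕ}
    (hg : ContDiffAt ℝ n g x) (hB : ∀ i ≤ n, |x| ^ i * |iteratedDeriv i g x| ≤ B) :
    |x| ^ n * |iteratedDeriv n (fun y => g y * y ^ 2) x| ≤ 2 ^ n * (B * (2 * x ^ 2)) :=
  abs_pow_mul_abs_iteratedDeriv_mul_le hg (contDiffAt_id.pow 2) fun i hi =>
    mul_le_mul (hB i hi) (abs_pow_mul_abs_iteratedDeriv_sq_le _ x) (by positivity)
      ((by positivity : (0:ℝ) ≤ |x| ^ i * |iteratedDeriv i g x|).trans (hB i hi))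

theorem abs_pow_mul_abs_iteratedDeriv_const_mul_comp_mul_mul_sq_le {f : ℝ → ℝ} {t ε x A : ℝ}
    {j : ℕ} (hf : ContDiff ℝ j f) (ht : 0 ≤ t)
    (hA : ∀ i ≤ j, |ε * x| ^ i * |iteratedDeriv i f (ε * x)| ≤ A) :
    |x| ^ j * |iteratedDeriv j (fun y => t * f (ε * y) * y ^ 2) x|
      ≤ 2 ^ j * (t * A * (2 * x ^ 2)) := by
  refine abs_pow_mul_abs_iteratedDeriv_mul_sq_le (by fun_prop) fun i hi => ?_
  rw [iteratedDeriv_const_mul_field, abs_mul, abs_of_nonneg ht, mul_left_comm,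
    abs_pow_mul_abs_iteratedDeriv_comp_const_mul (hf.of_le (mod_cast hi))]
  exact mul_le_mul_of_nonneg_left (hA i hi) ht

theorem deriv_exp_neg {φ : ℝ → ℝ} (hφ : Differentiable ℝ φ) :
    deriv (fun y => exp (-φ y)) = fun y => -(deriv φ y * exp (-φ y)) := by
  funext y
  rw [((hφ y).hasDerivAt.fun_neg.exp).deriv]
  ring

theorem iteratedDeriv_two_exp_neg {φ : ℝ → ℝ} (hφ : ContDiff ℝ 2 φ) (x : ℝ) :
    iteratedDeriv 2 (fun y => exp (-φ y)) x
      = (deriv φ x ^ 2 - iteratedDeriv 2 φ x) * exp (-φ x) := by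
  have hφ1 : Differentiable ℝ φ := hφ.differentiable (by norm_num)
  have hφ2 : Differentiable ℝ (deriv φ) := by
    simpa using hφ.differentiable_iteratedDeriv 1 (by norm_num)
  rw [iteratedDeriv_succ, iteratedDeriv_one, deriv_exp_neg hφ1, iteratedDeriv_succ,
    iteratedDeriv_one, (((hφ2 x).hasDerivAt.fun_mul (hφ1 x).hasDerivAt.fun_neg.exp).fun_neg).deriv]
  ring

theorem abs_pow_mul_abs_iteratedDeriv_exp_neg_le {φ : ℝ → ℝ} {x c u L : ℝ} (hφ : ContDiff ℝ 2 φ)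
    (hL : ∀ j ≤ 2, |x| ^ j * |iteratedDeriv j φ x| ≤ L * u) (hcφ : c * u ≤ φ x)
    {i : ℕ} (hi : i ≤ 2) :
    |x| ^ i * |iteratedDeriv i (fun y => exp (-φ y)) x| ≤ (1 + L * u) ^ 2 * exp (-(c * u)) := by
  have hLu : 0 ≤ L * u := (by positivity : (0:ℝ) ≤ |x| ^ 0 * |iteratedDeriv 0 φ x|).trans
    (hL 0 (by norm_num))
  have hexp : exp (-φ x) ≤ exp (-(c * u)) := exp_le_exp.mpr (by linarith)
  have h1 : |x| * |deriv φ x| ≤ L * u := by simpa using hL 1 (by norm_num)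
  have h2 : |x| ^ 2 * |iteratedDeriv 2 φ x| ≤ L * u := hL 2 le_rfl
  suffices h : ∃ P, 0 ≤ P ∧ P ≤ (1 + L * u) ^ 2 ∧
      |x| ^ i * |iteratedDeriv i (fun y => exp (-φ y)) x| ≤ P * exp (-φ x) by
    obtain ⟨P, hP0, hP, hle⟩ := h
    exact hle.trans (mul_le_mul hP hexp (exp_pos _).le (by positivity))
  interval_cases i
  · exact ⟨1, zero_le_one, by nlinarith, by simp⟩
  · refine ⟨|x| * |deriv φ x|, by positivity, by nlinarith, le_of_eq ?_⟩
    rw [iteratedDeriv_one, deriv_exp_neg (hφ.differentiable (by norm_num)), abs_neg, abs_mul,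
      abs_exp]
    ring
  · refine ⟨(|x| * |deriv φ x|) ^ 2 + |x| ^ 2 * |iteratedDeriv 2 φ x|, by positivity,
      by nlinarith [pow_le_pow_left₀ (by positivity) h1 2], ?_⟩
    rw [iteratedDeriv_two_exp_neg hφ, abs_mul, abs_exp, ← mul_assoc]
    gcongr
    calc |x| ^ 2 * |deriv φ x ^ 2 - iteratedDeriv 2 φ x|
        ≤ |x| ^ 2 * (|deriv φ x| ^ 2 + |iteratedDeriv 2 φ x|) := by
          gcongr
          exact (abs_sub _ _).trans_eq (by rw [abs_pow])
      _ = (|x| * |deriv φ x|) ^ 2 + |x| ^ 2 * |iteratedDeriv 2 φ x| := by ring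

theorem exists_bound_abs_pow_mul_abs_iteratedDeriv_exp_neg_mul {f χ : ℝ → ℝ} {c : ℝ}
    (hf : ContDiff ℝ 2 f) (hχ : ContDiff ℝ 2 χ) (hχs : HasCompactSupport χ)
    (hfc : ∀ x ∈ Function.support χ, c ≤ f x) :
    ∃ D, 0 ≤ D ∧ ∀ ε t x : ℝ, 0 ≤ t → ∀ k ≤ 2,
      |x| ^ k * |iteratedDeriv k (fun y => exp (-(t * f (ε * y) * y ^ 2)) * χ (ε * y)) x|
        ≤ D * ((1 + t * x ^ 2) ^ 2 * exp (-(c * (t * x ^ 2)))) := by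
  obtain ⟨Af, hAf0, hAf⟩ := hχs.isCompact.exists_bound_abs_pow_mul_abs_iteratedDeriv hf
  obtain ⟨Aχ, hAχ0, hAχ⟩ := hχs.isCompact.exists_bound_abs_pow_mul_abs_iteratedDeriv hχ
  have hfc' : ∀ z ∈ tsupport χ, c ≤ f z :=
    fun z hz => closure_minimal hfc (isClosed_le continuous_const hf.continuous) hz
  refine ⟨4 * Aχ * (1 + 8 * Af) ^ 2, by positivity, fun ε t x ht k hk => ?_⟩
  set u := t * x ^ 2
  have hu0 : 0 ≤ u := by positivity
  have hphase : ε * x ∈ tsupport χ → ∀ j ≤ 2,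
      |x| ^ j * |iteratedDeriv j (fun y => t * f (ε * y) * y ^ 2) x| ≤ 8 * Af * u := by
    intro hz j hj
    calc _ ≤ 2 ^ j * (t * Af * (2 * x ^ 2)) :=
          abs_pow_mul_abs_iteratedDeriv_const_mul_comp_mul_mul_sq_le (hf.of_le (mod_cast hj)) ht
            fun i hi => hAf i (hi.trans hj) _ hz
      _ ≤ 2 ^ 2 * (t * Af * (2 * x ^ 2)) := by gcongr; norm_num
      _ = 8 * Af * u := by ring
  have hexp : ε * x ∈ tsupport χ → ∀ i ≤ 2,
      |x| ^ i * |iteratedDeriv i (fun y => exp (-(t * f (ε * y) * y ^ 2))) x|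
        ≤ (1 + 8 * Af * u) ^ 2 * exp (-(c * u)) := fun hz i hi =>
    abs_pow_mul_abs_iteratedDeriv_exp_neg_le (by fun_prop) (hphase hz)
      (by nlinarith [hfc' _ hz, sq_nonneg x]) hi
  have hfk : ContDiff ℝ k f := hf.of_le (by exact_mod_cast hk)
  have hχk : ContDiff ℝ k χ := hχ.of_le (by exact_mod_cast hk)
  calc _ ≤ 2 ^ k * ((1 + 8 * Af * u) ^ 2 * exp (-(c * u)) * Aχ) := by
        refine abs_pow_mul_abs_iteratedDeriv_mul_le (by fun_prop) (by fun_prop) fun i hi => ?_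
        have hki : k - i ≤ 2 := (k.sub_le i).trans hk
        rw [abs_pow_mul_abs_iteratedDeriv_comp_const_mul (hχ.of_le (by exact_mod_cast hki))]
        by_cases hz : ε * x ∈ tsupport χ
        · exact mul_le_mul (hexp hz i (hi.trans hk)) (hAχ _ hki _ hz)
            (by positivity) (by positivity)
        · rw [iteratedDeriv_eq_zero_of_notMem_tsupport hz, abs_zero, mul_zero, mul_zero]
          positivity
    _ ≤ 2 ^ 2 * ((1 + 8 * Af) ^ 2 * (1 + u) ^ 2 * exp (-(c * u)) * Aχ) := by
        gcongr
        · norm_num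
        · rw [← mul_pow]
          gcongr
          nlinarith
    _ = _ := by ring

theorem stmt14_general (f χ : ℝ → ℝ) (c : ℝ) (hc : 0 < c)
    (hf : ContDiff ℝ 2 f)
    (hχ : ContDiff ℝ (⊤ : ℕ∞) χ) (hχs : HasCompactSupport χ)
    (hfc : ∀ x ∈ Function.support χ, c ≤ f x)
    (β : ℝ) (hβ : 0 ≤ β) (k : ℕ) (hk : k ≤ 2) :
    ∃ C : ℝ, 0 < C ∧ ∀ ε ∈ Set.Ioc (0:ℝ) 1, ∀ t : ℝ, 0 < t → ∀ x : ℝ,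
      t ^ (β / 2) * |x| ^ (β + (k : ℝ)) *
          |iteratedDeriv k (fun y => Real.exp (-(t * f (ε * y) * y ^ 2)) * χ (ε * y)) x|
        ≤ C := by
  obtain ⟨D, hD0, hD⟩ := exists_bound_abs_pow_mul_abs_iteratedDeriv_exp_neg_mul hf
    (hχ.of_le (WithTop.coe_le_coe.mpr le_top)) hχs hfc
  obtain ⟨K, hK⟩ := exists_rpow_mul_one_add_sq_mul_exp_neg_le hc (by positivity : 0 ≤ β / 2)
  refine ⟨max (D * K) 1, by positivity, fun ε _ t ht x => ?_⟩
  have hu0 : 0 ≤ t * x ^ 2 := by positivity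
  rw [rpow_half_mul_abs_rpow_add_natCast ht.le hβ, mul_assoc]
  calc _ ≤ (t * x ^ 2) ^ (β / 2) * (D * ((1 + t * x ^ 2) ^ 2 * exp (-(c * (t * x ^ 2))))) :=
        mul_le_mul_of_nonneg_left (hD ε t x ht.le k hk) (by positivity)
    _ = D * ((t * x ^ 2) ^ (β / 2) * ((1 + t * x ^ 2) ^ 2 * exp (-(c * (t * x ^ 2))))) := by ring
    _ ≤ D * K := by gcongr; exact hK _ hu0
    _ ≤ max (D * K) 1 := le_max_left _ _

/-- Uniform Fourier-multiplier bounds for the discrete heat semigroup symbol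
`ψ_ε(x) = e^{-t f(εx) x²} χ(εx)`: for `β ≥ 0` and `k ∈ {0,1,2}`,
`t^{β/2} |x|^{β+k} |ψ_ε^{(k)}(x)| ≤ C` uniformly in `ε ∈ (0,1]`, `t > 0`, `x ∈ ℝ`. -/
theorem stmt14 (f χ : ℝ → ℝ) (c : ℝ) (hc : 0 < c)
    (hf : ContDiff ℝ 2 f)
    (hfb : ∃ M : ℝ, ∀ x : ℝ, |f x| ≤ M ∧ |deriv f x| ≤ M ∧ |deriv (deriv f) x| ≤ M)
    (hχ : ContDiff ℝ (⊤ : ℕ∞) χ) (hχs : HasCompactSupport χ)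
    (hfc : ∀ x ∈ Function.support χ, c ≤ f x)
    (β : ℝ) (hβ : 0 ≤ β) (k : ℕ) (hk : k ≤ 2) :
    ∃ C : ℝ, 0 < C ∧ ∀ ε ∈ Set.Ioc (0:ℝ) 1, ∀ t : ℝ, 0 < t → ∀ x : ℝ,
      t ^ (β / 2) * |x| ^ (β + (k : ℝ)) *
          |iteratedDeriv k (fun y => Real.exp (-(t * f (ε * y) * y ^ 2)) * χ (ε * y)) x|
        ≤ C :=
  stmt14_general f χ c hc hf hχ hχs hfc β hβ k hk
end

section
/- Let 0 ≤ γ < 1 and let φ : ℝ → ℝ be measurable with ∫_ℝ |φ(r)| dr ≤ A and |φ(r)| ≤ B/|r| for all r ≠ 0, for some constants A, B ≥ 0. Then there exists a constant C, depending only on γ, such that for all λ > 0 and all t > 0: ∫₀^t λ·|φ(λ(t − s))| · s^{−γ} ds ≤ C·(A + B)·t^{−γ}. -/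
open MeasureTheory Set

/-!
Split `(0, t]` at `t/2`. Near `s = 0` the argument `λ(t - s)` is at least `λt/2`, so the
decay `|φ(r)| ≤ B/|r|` gives `λ|φ(λ(t - s))| ≤ 2B/t`, and the integrable singularity `s^{-γ}`
contributes `(t/2)^{1-γ}/(1-γ)`. Near `s = t` the weight satisfies `s^{-γ} ≤ (t/2)^{-γ}`, and
the substitution `r = λ(t - s)` turns the remaining integral of `λ|φ(λ(t - s))|` into
`∫|φ| ≤ A`. Both halves are thus bounded by multiples of `(t/2)^{-γ} = 2^γ t^{-γ}`.
-/

lemma lintegral_comp_mul_sub {f : ℝ → ENNReal} (hf : Measurable f) {c : ℝ} (hc : c ≠ 0)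
    (t : ℝ) : ∫⁻ s, f (c * (t - s)) = ENNReal.ofReal |c⁻¹| * ∫⁻ r, f r := by
  rw [(Measure.measurePreserving_sub_left volume t).lintegral_comp
      (f := fun s ↦ f (c * s)) (by fun_prop),
    ← lintegral_map hf (measurable_const_mul c), Real.map_volume_mul_left hc,
    lintegral_smul_measure, smul_eq_mul]

lemma setLIntegral_Ioc_zero_rpow_neg {γ : ℝ} (hγ : γ < 1) {a : ℝ} (ha : 0 ≤ a) :
    ∫⁻ s in Ioc 0 a, ENNReal.ofReal (s ^ (-γ)) = ENNReal.ofReal (a ^ (1 - γ) / (1 - γ)) := by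
  have hγ' : (-1 : ℝ) < -γ := by linarith
  have hnonneg : 0 ≤ᵐ[volume.restrict (Ioc 0 a)] fun s : ℝ ↦ s ^ (-γ) := by
    filter_upwards [ae_restrict_mem measurableSet_Ioc] with s hs
    exact Real.rpow_nonneg hs.1.le _
  rw [← ofReal_integral_eq_lintegral_ofReal
      (intervalIntegral.intervalIntegrable_rpow' hγ').1 hnonneg,
    ← intervalIntegral.integral_of_le ha, integral_rpow (Or.inl hγ'),
    Real.zero_rpow (by linarith), sub_zero, neg_add_eq_sub]

lemma mul_abs_comp_mul_le {φ : ℝ → ℝ} {B : ℝ} (hB : 0 ≤ B)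
    (hφ : ∀ r, r ≠ 0 → |φ r| ≤ B / |r|) {lam a x : ℝ} (hlam : 0 < lam) (ha : 0 < a)
    (hx : a ≤ x) : lam * |φ (lam * x)| ≤ B / a := by
  have hlx : 0 < lam * x := mul_pos hlam (ha.trans_le hx)
  calc lam * |φ (lam * x)| ≤ lam * (B / (lam * x)) := by
        gcongr
        simpa [abs_of_pos hlx] using hφ _ hlx.ne'
    _ = B / x := by field_simp
    _ ≤ B / a := by gcongr

section HalfIntervals

variable {φ : ℝ → ℝ} {γ lam t : ℝ}

lemma lintegral_Ioc_zero_half_le {B : ℝ} (hB : 0 ≤ B)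
    (hφ : ∀ r, r ≠ 0 → |φ r| ≤ B / |r|) (hγ : γ < 1) (hlam : 0 < lam) (ht : 0 < t) :
    ∫⁻ s in Ioc 0 (t / 2), ENNReal.ofReal (lam * |φ (lam * (t - s))| * s ^ (-γ))
      ≤ ENNReal.ofReal (B / (1 - γ) * (t / 2) ^ (-γ)) := by
  have ht2 : 0 < t / 2 := half_pos ht
  calc ∫⁻ s in Ioc 0 (t / 2), ENNReal.ofReal (lam * |φ (lam * (t - s))| * s ^ (-γ))
      ≤ ∫⁻ s in Ioc 0 (t / 2), ENNReal.ofReal (B / (t / 2)) * ENNReal.ofReal (s ^ (-γ)) := by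
        refine setLIntegral_mono (by fun_prop) fun s hs ↦ ?_
        rw [← ENNReal.ofReal_mul (by positivity)]
        gcongr
        · exact Real.rpow_nonneg hs.1.le _
        · exact mul_abs_comp_mul_le hB hφ hlam ht2 (by linarith [hs.2])
    _ = ENNReal.ofReal (B / (t / 2) * ((t / 2) ^ (1 - γ) / (1 - γ))) := by
        rw [lintegral_const_mul' _ _ ENNReal.ofReal_ne_top,
          setLIntegral_Ioc_zero_rpow_neg hγ ht2.le, ENNReal.ofReal_mul (by positivity)]
    _ = ENNReal.ofReal (B / (1 - γ) * (t / 2) ^ (-γ)) := by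
        rw [sub_eq_add_neg, Real.rpow_add ht2, Real.rpow_one]
        field_simp

lemma lintegral_Ioc_half_le (hφ : Measurable φ) (hγ : 0 ≤ γ) (hlam : 0 < lam) (ht : 0 < t) :
    ∫⁻ s in Ioc (t / 2) t, ENNReal.ofReal (lam * |φ (lam * (t - s))| * s ^ (-γ))
      ≤ ENNReal.ofReal ((t / 2) ^ (-γ)) * ∫⁻ r, ENNReal.ofReal |φ r| := by
  have ht2 : 0 < t / 2 := half_pos ht
  calc ∫⁻ s in Ioc (t / 2) t, ENNReal.ofReal (lam * |φ (lam * (t - s))| * s ^ (-γ))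
      ≤ ∫⁻ s in Ioc (t / 2) t,
          ENNReal.ofReal ((t / 2) ^ (-γ) * lam) * ENNReal.ofReal |φ (lam * (t - s))| := by
        refine setLIntegral_mono (by fun_prop) fun s hs ↦ ?_
        rw [← ENNReal.ofReal_mul (by positivity)]
        have hpow : s ^ (-γ) ≤ (t / 2) ^ (-γ) :=
          Real.rpow_le_rpow_of_nonpos ht2 hs.1.le (neg_nonpos.mpr hγ)
        refine ENNReal.ofReal_le_ofReal ?_
        calc lam * |φ (lam * (t - s))| * s ^ (-γ)
            ≤ lam * |φ (lam * (t - s))| * (t / 2) ^ (-γ) := by gcongr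
          _ = (t / 2) ^ (-γ) * lam * |φ (lam * (t - s))| := by ring
    _ ≤ ENNReal.ofReal ((t / 2) ^ (-γ) * lam)
          * ∫⁻ s, ENNReal.ofReal |φ (lam * (t - s))| := by
        rw [lintegral_const_mul' _ _ ENNReal.ofReal_ne_top]
        gcongr
        exact Measure.restrict_le_self
    _ = ENNReal.ofReal ((t / 2) ^ (-γ)) * ∫⁻ r, ENNReal.ofReal |φ r| := by
        rw [lintegral_comp_mul_sub (f := fun r ↦ ENNReal.ofReal |φ r|) (by fun_prop) hlam.ne',
          ← mul_assoc, ← ENNReal.ofReal_mul (by positivity), abs_of_pos (inv_pos.mpr hlam),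
          mul_assoc, mul_inv_cancel₀ hlam.ne', mul_one]

end HalfIntervals

lemma half_rpow_neg {t : ℝ} (ht : 0 ≤ t) (γ : ℝ) : (t / 2) ^ (-γ) = 2 ^ γ * t ^ (-γ) := by
  rw [Real.div_rpow ht zero_le_two, Real.rpow_neg zero_le_two, div_inv_eq_mul, mul_comm]

/-- Scaling estimate for time mollifiers: if `∫|φ| ≤ A` and `|φ(r)| ≤ B/|r|`, then for
`0 ≤ γ < 1` there is `C = C(γ)` with
`∫₀^t λ |φ(λ(t-s))| s^{-γ} ds ≤ C (A+B) t^{-γ}` for all `λ, t > 0`. -/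
theorem stmt15 (γ : ℝ) (hγ0 : 0 ≤ γ) (hγ1 : γ < 1) :
    ∃ C : ℝ, ∀ (φ : ℝ → ℝ) (A B : ℝ), 0 ≤ A → 0 ≤ B → Measurable φ →
      (∫⁻ r : ℝ, ENNReal.ofReal |φ r|) ≤ ENNReal.ofReal A →
      (∀ r : ℝ, r ≠ 0 → |φ r| ≤ B / |r|) →
      ∀ lam : ℝ, 0 < lam → ∀ t : ℝ, 0 < t →
        (∫⁻ s in Set.Ioc (0:ℝ) t,
            ENNReal.ofReal (lam * |φ (lam * (t - s))| * s ^ (-γ)))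
          ≤ ENNReal.ofReal (C * (A + B) * t ^ (-γ)) := by
  refine ⟨2 ^ γ / (1 - γ), fun φ A B hA hB hφm hφA hφB lam hlam t ht ↦ ?_⟩
  have h1γ : 0 < 1 - γ := by linarith
  have hAγ : A ≤ A / (1 - γ) := le_div_self hA h1γ (by linarith)
  rw [← Ioc_union_Ioc_eq_Ioc (half_pos ht).le (half_le_self ht.le),
    lintegral_union measurableSet_Ioc (Ioc_disjoint_Ioc_of_le le_rfl)]
  calc _ ≤ ENNReal.ofReal (B / (1 - γ) * (t / 2) ^ (-γ))
          + ENNReal.ofReal ((t / 2) ^ (-γ)) * ENNReal.ofReal A := by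
        gcongr
        · exact lintegral_Ioc_zero_half_le hB hφB hγ1 hlam ht
        · exact (lintegral_Ioc_half_le hφm hγ0 hlam ht).trans (by gcongr)
    _ = ENNReal.ofReal ((B / (1 - γ) + A) * (t / 2) ^ (-γ)) := by
        rw [← ENNReal.ofReal_mul (by positivity), ← ENNReal.ofReal_add (by positivity)
          (by positivity), add_mul, mul_comm A]
    _ ≤ ENNReal.ofReal (2 ^ γ / (1 - γ) * (A + B) * t ^ (-γ)) := by
        refine ENNReal.ofReal_le_ofReal ?_
        calc (B / (1 - γ) + A) * (t / 2) ^ (-γ)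
            ≤ (B / (1 - γ) + A / (1 - γ)) * (t / 2) ^ (-γ) := by gcongr
          _ = 2 ^ γ / (1 - γ) * (A + B) * t ^ (-γ) := by
              rw [half_rpow_neg ht.le]
              field_simp
              ring
end
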